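/- arXiv:2201.10835 — 8 statements merged into one kernel-verified Lean document; each statement's English description precedes it below -/
import Mathlib

section
/- Let G be an α-expander on n vertices, and let S, T ⊆ V(G) be disjoint vertex sets with |T| ≥ (2/α)|S|. Then for every r ≥ 0, the ball of radius r around T in the induced subgraph G \ S has size at least min{n/2, (1 + α/2)^r · |T|}. -/
/-!
Write `B r` for the ball of radius `r` around `T` in `G \ S`. As long as `|B r| ≤ n/2`, expansion
gives `|N(B r) \ B r| ≥ α |B r|`, and every such neighbour outside `S` lies in `B (r + 1)`. Since
`|S| ≤ (α/2) |T| ≤ (α/2) |B r|`, removing `S` costs at most half of the expansion, so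
`|B (r + 1)| ≥ (1 + α/2) |B r|`; iterating from `B 0 ⊇ T` gives the bound.
-/

/-- A graph `G` on `n` vertices is an `α`-expander if every vertex set `U` with
`|U| ≤ n/2` satisfies `|N(U) \ U| ≥ α |U|`. -/
def SimpleGraph.IsExpander {V : Type*} [Fintype V] [DecidableEq V]
    (G : SimpleGraph V) [DecidableRel G.Adj] (α : ℝ) : Prop :=
  ∀ U : Finset V, 2 * U.card ≤ Fintype.card V →
    α * U.card ≤ ((U.biUnion (fun v => G.neighborFinset v)) \ U).card

/-- The ball of radius `r` around `T` in the induced subgraph `G \ S`: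
all vertices reachable from `T` by a walk of length at most `r` avoiding `S`. -/
def SimpleGraph.ballAvoiding {V : Type*} (G : SimpleGraph V)
    (S T : Finset V) (r : ℕ) : Set V :=
  {v : V | ∃ t ∈ T, ∃ w : G.Walk t v, w.length ≤ r ∧ ∀ x ∈ w.support, x ∉ S}

lemma min_half_pow_mul_le_of_mul_le_succ {b : ℕ → ℝ} {n c t : ℝ} (hb : Monotone b)
    (hc : 0 ≤ c) (h₀ : t ≤ b 0) (hstep : ∀ r, 2 * b r ≤ n → c * b r ≤ b (r + 1)) (r : ℕ) :
    min (n / 2) (c ^ r * t) ≤ b r := by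
  induction r with
  | zero => exact (min_le_right _ _).trans (by simpa using h₀)
  | succ r ih =>
    rcases le_or_gt (n / 2) (b (r + 1)) with hlarge | hsmall
    · exact (min_le_left _ _).trans hlarge
    have hbr : b r < n / 2 := (hb r.le_succ).trans_lt hsmall
    have hpow : c ^ r * t ≤ b r := (min_le_iff.mp ih).resolve_left hbr.not_ge
    calc min (n / 2) (c ^ (r + 1) * t) ≤ c * (c ^ r * t) := by
          rw [pow_succ', mul_assoc]; exact min_le_right _ _
      _ ≤ c * b r := mul_le_mul_of_nonneg_left hpow hc
      _ ≤ b (r + 1) := hstep r (by linarith)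

namespace SimpleGraph

variable {V : Type*} (G : SimpleGraph V) (S T : Finset V)

lemma ballAvoiding_mono : Monotone (G.ballAvoiding S T) := by
  rintro r s hrs v ⟨t, ht, w, hw, hS⟩
  exact ⟨t, ht, w, hw.trans hrs, hS⟩

lemma coe_subset_ballAvoiding (hST : Disjoint S T) (r : ℕ) :
    (T : Set V) ⊆ G.ballAvoiding S T r := by
  intro t ht
  refine ⟨t, ht, Walk.nil, Nat.zero_le r, ?_⟩
  simp only [Walk.support_nil, List.mem_singleton, forall_eq]
  exact Finset.disjoint_right.mp hST ht

variable {G S T}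

lemma mem_ballAvoiding_succ_of_adj {r : ℕ} {u v : V} (hu : u ∈ G.ballAvoiding S T r)
    (hadj : G.Adj u v) (hv : v ∉ S) : v ∈ G.ballAvoiding S T (r + 1) := by
  obtain ⟨t, ht, w, hw, hS⟩ := hu
  refine ⟨t, ht, w.concat hadj, by simpa using hw, ?_⟩
  simp only [Walk.support_concat, List.mem_append, List.mem_singleton]
  rintro x (hx | rfl)
  exacts [hS x hx, hv]

variable [Fintype V] [DecidableEq V] [DecidableRel G.Adj]

lemma card_add_card_neighbors_sdiff_le {r : ℕ} (U : Finset V)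
    (hU : (U : Set V) ⊆ G.ballAvoiding S T r) :
    U.card + (U.biUnion (fun v => G.neighborFinset v) \ U).card
      ≤ (G.ballAvoiding S T (r + 1)).ncard + S.card := by
  set X := U.biUnion (fun v => G.neighborFinset v) \ U
  have hdisj : Disjoint U (X \ S) := Finset.disjoint_left.mpr fun v hvU hvX =>
    (Finset.mem_sdiff.mp (Finset.mem_sdiff.mp hvX).1).2 hvU
  have hsub : ((U ∪ X \ S : Finset V) : Set V) ⊆ G.ballAvoiding S T (r + 1) := by
    intro v hv
    rcases Finset.mem_union.mp hv with hvU | hvXS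
    · exact G.ballAvoiding_mono S T r.le_succ (hU hvU)
    obtain ⟨hvX, hvS⟩ := Finset.mem_sdiff.mp hvXS
    obtain ⟨u, huU, huv⟩ := Finset.mem_biUnion.mp (Finset.mem_sdiff.mp hvX).1
    exact mem_ballAvoiding_succ_of_adj (hU huU) ((G.mem_neighborFinset u v).mp huv) hvS
  have hball : U.card + (X \ S).card ≤ (G.ballAvoiding S T (r + 1)).ncard := by
    rw [← Finset.card_union_of_disjoint hdisj, ← Set.ncard_coe_finset]
    exact Set.ncard_le_ncard hsub
  have hS : X.card ≤ (X \ S).card + S.card := Finset.card_le_card_sdiff_add_card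
  omega

lemma one_add_half_mul_ncard_ballAvoiding_le {α : ℝ} (hα : 0 ≤ α) (hG : G.IsExpander α)
    (hST : Disjoint S T) (hS : (S.card : ℝ) ≤ α / 2 * T.card) {r : ℕ}
    (hsmall : 2 * ((G.ballAvoiding S T r).ncard : ℝ) ≤ Fintype.card V) :
    (1 + α / 2) * (G.ballAvoiding S T r).ncard ≤ (G.ballAvoiding S T (r + 1)).ncard := by
  obtain ⟨U, hU⟩ := (G.ballAvoiding S T r).toFinite.exists_finset_coe
  rw [← hU, Set.ncard_coe_finset] at hsmall ⊢
  have hexp := hG U (by exact_mod_cast hsmall)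
  have hgrow : (U.card : ℝ) + (U.biUnion (fun v => G.neighborFinset v) \ U).card
      ≤ (G.ballAvoiding S T (r + 1)).ncard + S.card := by
    exact_mod_cast card_add_card_neighbors_sdiff_le U hU.subset
  have hTU : (T.card : ℝ) ≤ U.card := by
    rw [← Set.ncard_coe_finset T, ← Set.ncard_coe_finset U, hU]
    exact_mod_cast Set.ncard_le_ncard (G.coe_subset_ballAvoiding S T hST r)
  linarith [mul_le_mul_of_nonneg_left hTU hα]

end SimpleGraph

/-- Let `G` be an `α`-expander on `n` vertices and `S, T` disjoint sets with
`|T| ≥ (2/α)|S|`.  Then for every `r ≥ 0` the ball of radius `r` around `T`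
in `G \ S` has size at least `min (n/2) ((1+α/2)^r |T|)`. -/
theorem expander_ball_remove {V : Type*} [Fintype V] [DecidableEq V]
    (G : SimpleGraph V) [DecidableRel G.Adj] (α : ℝ) (hα : 0 < α)
    (hG : G.IsExpander α) (S T : Finset V) (hST : Disjoint S T)
    (hT : (2 / α) * S.card ≤ T.card) (r : ℕ) :
    min ((Fintype.card V : ℝ) / 2) ((1 + α / 2) ^ r * T.card)
      ≤ (G.ballAvoiding S T r).ncard := by
  have hS : (S.card : ℝ) ≤ α / 2 * T.card := by
    rw [div_mul_eq_mul_div, div_le_iff₀ hα] at hT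
    linarith
  refine min_half_pow_mul_le_of_mul_le_succ (b := fun r => ((G.ballAvoiding S T r).ncard : ℝ))
    (fun r s hrs => Nat.cast_le.mpr (Set.ncard_le_ncard (G.ballAvoiding_mono S T hrs)))
    (by positivity) ?_
    (fun r => SimpleGraph.one_add_half_mul_ncard_ballAvoiding_le hα.le hG hST hS) r
  rw [← Set.ncard_coe_finset T]
  exact_mod_cast Set.ncard_le_ncard (G.coe_subset_ballAvoiding S T hST 0)
end

section
/- Let G be an α-expander on n vertices and let S, T, U ⊆ V(G) with T, U nonempty, S disjoint from T ∪ U, and |T|, |U| ≥ (2/α)|S|. Then in the induced subgraph G \ S, the distance between T and U is at most (2/log₂(1+α/2) + 3)·log₂ n. -/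
/-!
Grow balls around `T` and around `U` inside `G \ S`, one step at a time. As long as a ball `B`
has at most `n/2` vertices, expansion gives it at least `α|B|` outside neighbours, of which at
most `|S| ≤ (α/2)|T| ≤ (α/2)|B|` are lost to `S`; so the ball grows by a factor `1 + α/2` per
step and exceeds `n/2` vertices after at most `log₂ n / log₂(1 + α/2)` steps. Two sets with
more than `n/2` vertices each meet, which joins a walk from `T` with a walk from `U`.
-/

namespace SimpleGraph

open Finset

variable {V : Type*} [DecidableEq V]

section LocallyFinite

variable (G : SimpleGraph V) [LocallyFinite G]

def outerBoundary (B : Finset V) : Finset V :=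
  B.biUnion (fun v => G.neighborFinset v) \ B

/-- The ball of radius `i` around `T` in `G \ S`, provided `T` misses `S`. -/
def ballAvoiding_s2 (S T : Finset V) : ℕ → Finset V
  | 0 => T
  | i + 1 => ballAvoiding_s2 S T i ∪ (G.outerBoundary (ballAvoiding_s2 S T i) \ S)

variable {G}

lemma subset_ballAvoiding (S T : Finset V) : ∀ i, T ⊆ G.ballAvoiding_s2 S T i
  | 0 => subset_rfl
  | i + 1 => (subset_ballAvoiding S T i).trans subset_union_left

lemma exists_walk_of_mem_ballAvoiding {S T : Finset V} (hST : Disjoint S T) :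
    ∀ {i : ℕ} {x : V}, x ∈ G.ballAvoiding_s2 S T i →
      ∃ t ∈ T, ∃ w : G.Walk t x, (∀ y ∈ w.support, y ∉ S) ∧ w.length ≤ i
  | 0, x, hx => ⟨x, hx, .nil, by simpa using disjoint_right.mp hST hx, le_rfl⟩
  | i + 1, x, hx => by
    rcases mem_union.mp hx with hx | hx
    · obtain ⟨t, ht, w, hwS, hw⟩ := exists_walk_of_mem_ballAvoiding hST hx
      exact ⟨t, ht, w, hwS, hw.trans i.le_succ⟩
    · obtain ⟨⟨hxN, -⟩, hxS⟩ := mem_sdiff.mp hx |>.imp_left mem_sdiff.mp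
      obtain ⟨y, hy, hyx⟩ := mem_biUnion.mp hxN
      obtain ⟨t, ht, w, hwS, hw⟩ := exists_walk_of_mem_ballAvoiding hST hy
      refine ⟨t, ht, w.concat ((mem_neighborFinset G y x).mp hyx), ?_, ?_⟩
      · intro z hz
        rw [Walk.support_concat, List.mem_append, List.mem_singleton] at hz
        rcases hz with hz | rfl
        exacts [hwS z hz, hxS]
      · rw [Walk.length_concat]
        omega

end LocallyFinite

variable {G : SimpleGraph V} [Fintype V] [DecidableRel G.Adj] {α : ℝ}

lemma IsExpander.mul_card_le_card_union_outerBoundary_sdiff (hG : G.IsExpander α)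
    {B : Finset V} (hB : 2 * B.card ≤ Fintype.card V) {S : Finset V}
    (hSB : (S.card : ℝ) ≤ α / 2 * B.card) :
    (1 + α / 2) * B.card ≤ (B ∪ (G.outerBoundary B \ S)).card := by
  have hexp : α * B.card ≤ (G.outerBoundary B).card := hG B hB
  have hdisj : Disjoint B (G.outerBoundary B \ S) :=
    disjoint_sdiff.mono_right sdiff_subset
  have hsdiff : ((G.outerBoundary B).card : ℝ) ≤ (G.outerBoundary B \ S).card + S.card := by
    exact_mod_cast card_le_card_sdiff_add_card
  rw [card_union_of_disjoint hdisj]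
  push_cast
  linarith

lemma IsExpander.pow_mul_card_le_card_ballAvoiding (hG : G.IsExpander α) (hα : 0 < α)
    {S T : Finset V} (hT : (2 / α) * S.card ≤ T.card) :
    ∀ k : ℕ, (∀ j < k, 2 * (G.ballAvoiding_s2 S T j).card ≤ Fintype.card V) →
      (1 + α / 2) ^ k * T.card ≤ (G.ballAvoiding_s2 S T k).card
  | 0, _ => by simp [ballAvoiding_s2]
  | k + 1, hsmall => by
    have hST : (S.card : ℝ) ≤ α / 2 * T.card := by
      rw [div_mul_eq_mul_div, div_le_iff₀ hα] at hT
      linarith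
    have hTB : (T.card : ℝ) ≤ (G.ballAvoiding_s2 S T k).card := by
      exact_mod_cast card_le_card (subset_ballAvoiding S T k)
    have hSB : (S.card : ℝ) ≤ α / 2 * (G.ballAvoiding_s2 S T k).card :=
      hST.trans (by gcongr)
    have ih := hG.pow_mul_card_le_card_ballAvoiding hα hT k
      fun j hj => hsmall j (hj.trans k.lt_succ_self)
    calc (1 + α / 2) ^ (k + 1) * T.card = (1 + α / 2) * ((1 + α / 2) ^ k * T.card) := by ring
      _ ≤ (1 + α / 2) * (G.ballAvoiding_s2 S T k).card := by gcongr
      _ ≤ (G.ballAvoiding_s2 S T (k + 1)).card :=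
        hG.mul_card_le_card_union_outerBoundary_sdiff (hsmall k k.lt_succ_self) hSB

lemma IsExpander.le_logb_div_logb_of_forall_card_ballAvoiding_le (hG : G.IsExpander α)
    (hα : 0 < α) {S T : Finset V} (hTne : T.Nonempty) (hT : (2 / α) * S.card ≤ T.card)
    {k : ℕ} (hsmall : ∀ j < k, 2 * (G.ballAvoiding_s2 S T j).card ≤ Fintype.card V) :
    (k : ℝ) ≤ Real.logb 2 (Fintype.card V) / Real.logb 2 (1 + α / 2) := by
  have hbase : 1 < 1 + α / 2 := by linarith
  have hpow : (1 + α / 2) ^ k ≤ (Fintype.card V : ℝ) :=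
    calc (1 + α / 2) ^ k ≤ (1 + α / 2) ^ k * T.card :=
          le_mul_of_one_le_right (by positivity) (by exact_mod_cast hTne.card_pos)
      _ ≤ (G.ballAvoiding_s2 S T k).card := hG.pow_mul_card_le_card_ballAvoiding hα hT k hsmall
      _ ≤ Fintype.card V := by exact_mod_cast card_le_univ _
  rw [le_div_iff₀ (Real.logb_pos one_lt_two hbase), ← Real.logb_pow]
  exact Real.logb_le_logb_of_le one_lt_two (by positivity) hpow

lemma IsExpander.exists_card_ballAvoiding_gt (hG : G.IsExpander α) (hα : 0 < α)
    {S T : Finset V} (hTne : T.Nonempty) (hT : (2 / α) * S.card ≤ T.card) :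
    ∃ k : ℕ, (k : ℝ) ≤ Real.logb 2 (Fintype.card V) / Real.logb 2 (1 + α / 2) ∧
      Fintype.card V < 2 * (G.ballAvoiding_s2 S T k).card := by
  have hex : ∃ k, Fintype.card V < 2 * (G.ballAvoiding_s2 S T k).card := by
    by_contra! hsmall
    obtain ⟨k, hk⟩ := exists_nat_gt (Real.logb 2 (Fintype.card V) / Real.logb 2 (1 + α / 2))
    exact hk.not_ge (hG.le_logb_div_logb_of_forall_card_ballAvoiding_le hα hTne hT
      fun j _ => hsmall j)
  refine ⟨Nat.find hex, ?_, Nat.find_spec hex⟩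
  exact hG.le_logb_div_logb_of_forall_card_ballAvoiding_le hα hTne hT
    fun j hj => not_lt.mp (Nat.find_min hex hj)

end SimpleGraph

open SimpleGraph Finset in
/-- Let `G` be an `α`-expander on `n` vertices and `S, T, U` vertex sets with
`T, U` nonempty, `S` disjoint from `T ∪ U`, and `|T|, |U| ≥ (2/α)|S|`.
Then in `G \ S` the distance between `T` and `U` is at most
`(2/log₂(1+α/2) + 3) · log₂ n`, i.e. there is a walk between `T` and `U`
avoiding `S` of at most that length. -/
theorem expander_dist_remove {V : Type*} [Fintype V] [DecidableEq V]
    (G : SimpleGraph V) [DecidableRel G.Adj] (α : ℝ) (hα : 0 < α)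
    (hG : G.IsExpander α) (S T U : Finset V)
    (hTne : T.Nonempty) (hUne : U.Nonempty)
    (hS : Disjoint S (T ∪ U))
    (hT : (2 / α) * S.card ≤ T.card) (hU : (2 / α) * S.card ≤ U.card) :
    ∃ t ∈ T, ∃ u ∈ U, ∃ w : G.Walk t u,
      (∀ x ∈ w.support, x ∉ S) ∧
      (w.length : ℝ) ≤ (2 / Real.logb 2 (1 + α / 2) + 3) *
        Real.logb 2 (Fintype.card V) := by
  obtain ⟨K, hK, hBT⟩ := hG.exists_card_ballAvoiding_gt hα hTne hT
  obtain ⟨M, hM, hBU⟩ := hG.exists_card_ballAvoiding_gt hα hUne hU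
  obtain ⟨x, hx⟩ := inter_nonempty_of_card_lt_card_add_card
    (subset_univ (G.ballAvoiding_s2 S T K)) (subset_univ (G.ballAvoiding_s2 S U M))
    (by rw [card_univ]; omega)
  obtain ⟨hxT, hxU⟩ := mem_inter.mp hx
  obtain ⟨t, ht, wT, hwT, hlenT⟩ :=
    exists_walk_of_mem_ballAvoiding (hS.mono_right subset_union_left) hxT
  obtain ⟨u, hu, wU, hwU, hlenU⟩ :=
    exists_walk_of_mem_ballAvoiding (hS.mono_right subset_union_right) hxU
  refine ⟨t, ht, u, hu, wT.append wU.reverse, fun y hy => ?_, ?_⟩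
  · rcases (Walk.mem_support_append_iff _ _).mp hy with hy | hy
    exacts [hwT y hy, hwU y (by simpa using hy)]
  · have hlog : 0 ≤ Real.logb 2 (Fintype.card V) :=
      Real.logb_nonneg one_lt_two (by exact_mod_cast Fintype.card_pos_iff.mpr ⟨x⟩)
    have hlen : ((wT.append wU.reverse).length : ℝ) ≤ K + M := by
      rw [Walk.length_append, Walk.length_reverse]
      exact_mod_cast add_le_add hlenT hlenU
    calc ((wT.append wU.reverse).length : ℝ) ≤ K + M := hlen
      _ ≤ 2 / Real.logb 2 (1 + α / 2) * Real.logb 2 (Fintype.card V) := by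
        rw [div_mul_eq_mul_div, mul_div_assoc]; linarith
      _ ≤ _ := by nlinarith
end

section
/- Every graph G has vertex expansion at least λ₂(L_G)/(2Δ(G)), i.e., every vertex set U with |U| ≤ n/2 satisfies |N(U) ∩ (V\U)| ≥ (λ₂(L_G)/(2Δ(G)))·|U|. -/
/-!
For `x` orthogonal to the all-ones kernel vector of the Laplacian `L`, expanding `x` in an
orthonormal eigenbasis gives `λ₂ ‖x‖² ≤ xᵀ L x = ∑_{ij ∈ E} (x_i - x_j)²`. Take
`x = n • 1_U - |U| • 1`: then `‖x‖² = |U| (n - |U|) n`, and `(x_i - x_j)² = n²` exactly on the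
edges between `U` and its complement. Each such edge ends in `N(U) \ U`, whose vertices carry at
most `Δ` edges each, so `λ₂ |U| (n - |U|) ≤ n Δ |N(U) \ U|`; finally `n - |U| ≥ n / 2`.
-/

open Matrix

/-- The eigenvalues of a Hermitian matrix, listed in non-decreasing order. -/
noncomputable def sortedEigs {n : ℕ} (A : Matrix (Fin n) (Fin n) ℝ)
    (hA : A.IsHermitian) : Fin n → ℝ :=
  hA.eigenvalues ∘ Tuple.sort hA.eigenvalues

/-- The Laplacian of a graph is Hermitian. -/
theorem lapMatrix_isHermitian {n : ℕ} (G : SimpleGraph (Fin n))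
    [DecidableRel G.Adj] : (G.lapMatrix ℝ).IsHermitian :=
  (G.posSemidef_lapMatrix ℝ).isHermitian

theorem Tuple.apply_sort_one_le {α : Type*} [LinearOrder α] {n : ℕ} (hn : 1 < n)
    (f : Fin n → α) {i : Fin n} (hi : i ≠ Tuple.sort f ⟨0, by omega⟩) :
    f (Tuple.sort f ⟨1, hn⟩) ≤ f i := by
  obtain ⟨j, rfl⟩ := (Tuple.sort f).surjective i
  have hj : (j : ℕ) ≠ 0 := fun h => hi (congrArg _ (Fin.ext h))
  exact Tuple.monotone_sort f (show 1 ≤ (j : ℕ) by omega)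

theorem apply_sort_one_mul_sum_sq_le {n : ℕ} (hn : 1 < n) {μ c d : Fin n → ℝ}
    (hμ : 0 ≤ μ) (hμd : μ * d = 0) (hd : d ≠ 0) (hdc : d ⬝ᵥ c = 0) :
    μ (Tuple.sort μ ⟨1, hn⟩) * ∑ i, c i ^ 2 ≤ ∑ i, μ i * c i ^ 2 := by
  rw [Finset.mul_sum]
  refine Finset.sum_le_sum fun i _ => ?_
  by_cases hi : μ (Tuple.sort μ ⟨1, hn⟩) ≤ μ i
  · exact mul_le_mul_of_nonneg_right hi (sq_nonneg _)
  -- Then `μ i` is the smallest value and is attained only at `i`, so `d` is supported on `{i}`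
  -- and `d ⬝ᵥ c = 0` forces `c i = 0`.
  have hi₀ : i = Tuple.sort μ ⟨0, by omega⟩ :=
    by_contra fun h => hi (Tuple.apply_sort_one_le hn μ h)
  have hd_eq : ∀ j ≠ i, d j = 0 := fun j hj =>
    have hμj : μ i < μ j := (not_le.mp hi).trans_le (Tuple.apply_sort_one_le hn μ (hi₀ ▸ hj))
    (mul_eq_zero.mp (congrFun hμd j)).resolve_left ((hμ i).trans_lt hμj).ne'
  have hdi : d i ≠ 0 := fun h0 => hd (funext fun j => by
    rcases eq_or_ne j i with rfl | hj
    exacts [h0, hd_eq j hj])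
  have hci : c i = 0 := by
    rw [dotProduct, Finset.sum_eq_single i (fun j _ hj => by rw [hd_eq j hj, zero_mul])
      (by simp)] at hdc
    exact (mul_eq_zero.mp hdc).resolve_left hdi
  simp [hci]

theorem Matrix.star_mulVec_dotProduct_star_mulVec_of_mem_unitaryGroup {ι : Type*} [Fintype ι]
    [DecidableEq ι] {U : Matrix ι ι ℝ} (hU : U ∈ unitaryGroup ι ℝ) (x y : ι → ℝ) :
    (star U *ᵥ x) ⬝ᵥ (star U *ᵥ y) = x ⬝ᵥ y := by
  have hT : (star U)ᵀ = U := by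
    rw [star_eq_conjTranspose, conjTranspose_eq_transpose_of_trivial, transpose_transpose]
  rw [dotProduct_mulVec, ← mulVec_transpose, hT, mulVec_mulVec, Unitary.mul_star_self_of_mem hU,
    one_mulVec]

namespace Matrix.IsHermitian

variable {ι : Type*} [Fintype ι] [DecidableEq ι] {A : Matrix ι ι ℝ} (hA : A.IsHermitian)

theorem star_eigenvectorUnitary_mulVec_mulVec (x : ι → ℝ) :
    star (hA.eigenvectorUnitary : Matrix ι ι ℝ) *ᵥ (A *ᵥ x) =
      hA.eigenvalues * (star (hA.eigenvectorUnitary : Matrix ι ι ℝ) *ᵥ x) := by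
  set U : Matrix ι ι ℝ := ↑hA.eigenvectorUnitary
  have hdiag : star U * A * U = diagonal hA.eigenvalues := by
    simpa using hA.conjStarAlgAut_star_eigenvectorUnitary
  have hcomm : star U * A = diagonal hA.eigenvalues * star U := by
    rw [← hdiag, mul_assoc _ U, Unitary.mul_star_self_of_mem hA.eigenvectorUnitary.2, mul_one]
  rw [mulVec_mulVec, hcomm, ← mulVec_mulVec]
  ext i
  exact mulVec_diagonal _ _ i

theorem dotProduct_mulVec_eq_sum_eigenvalues_mul_sq (x : ι → ℝ) :
    x ⬝ᵥ (A *ᵥ x) =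
      ∑ i, hA.eigenvalues i * (star (hA.eigenvectorUnitary : Matrix ι ι ℝ) *ᵥ x) i ^ 2 := by
  rw [← star_mulVec_dotProduct_star_mulVec_of_mem_unitaryGroup hA.eigenvectorUnitary.2,
    star_eigenvectorUnitary_mulVec_mulVec, dotProduct]
  exact Finset.sum_congr rfl fun i _ => by rw [Pi.mul_apply]; ring

end Matrix.IsHermitian

theorem Matrix.PosSemidef.sortedEigs_one_mul_dotProduct_self_le {n : ℕ} (hn : 1 < n)
    {A : Matrix (Fin n) (Fin n) ℝ} (hA : A.PosSemidef) {w x : Fin n → ℝ} (hw : A *ᵥ w = 0)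
    (hw0 : w ≠ 0) (hwx : w ⬝ᵥ x = 0) :
    sortedEigs A hA.isHermitian ⟨1, hn⟩ * (x ⬝ᵥ x) ≤ x ⬝ᵥ (A *ᵥ x) := by
  set U : Matrix (Fin n) (Fin n) ℝ := ↑hA.isHermitian.eigenvectorUnitary
  have hU : U ∈ unitaryGroup (Fin n) ℝ := hA.isHermitian.eigenvectorUnitary.2
  have hnorm : x ⬝ᵥ x = ∑ i, (star U *ᵥ x) i ^ 2 := by
    rw [← star_mulVec_dotProduct_star_mulVec_of_mem_unitaryGroup hU, dotProduct]
    simp only [sq]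
  rw [hnorm, hA.isHermitian.dotProduct_mulVec_eq_sum_eigenvalues_mul_sq]
  refine apply_sort_one_mul_sum_sq_le hn (d := star U *ᵥ w) hA.eigenvalues_nonneg ?_ ?_ ?_
  · rw [← hA.isHermitian.star_eigenvectorUnitary_mulVec_mulVec, hw, mulVec_zero]
  · intro hd
    refine hw0 (dotProduct_self_eq_zero.mp ?_)
    rw [← star_mulVec_dotProduct_star_mulVec_of_mem_unitaryGroup hU, hd, zero_dotProduct]
  · rwa [star_mulVec_dotProduct_star_mulVec_of_mem_unitaryGroup hU]

section

open Finset

theorem Fintype.sum_ite_mem_const {V : Type*} [Fintype V] [DecidableEq V] (U : Finset V)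
    (a b : ℝ) : ∑ v, (if v ∈ U then a else b) = #U * a + (Fintype.card V - #U) * b := by
  simp [Finset.sum_ite, filter_not, card_univ_sdiff, Nat.cast_sub (card_le_univ U)]

namespace SimpleGraph

variable {V : Type*} [Fintype V] (G : SimpleGraph V) [DecidableRel G.Adj]

theorem sum_sum_ite_adj (f : V → ℝ) :
    ∑ i, ∑ j, (if G.Adj i j then f i else 0) = ∑ i, G.degree i * f i := by
  simp_rw [G.degree_eq_sum_if_adj, Finset.sum_mul, ite_mul, one_mul, zero_mul]

variable [DecidableEq V]

def outerVertexBoundary (U : Finset V) : Finset V :=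
  U.biUnion (fun v => G.neighborFinset v) \ U

theorem mem_outerVertexBoundary_of_adj {U : Finset V} {i j : V} (hij : G.Adj i j) (hi : i ∈ U)
    (hj : j ∉ U) : j ∈ G.outerVertexBoundary U :=
  mem_sdiff.mpr ⟨mem_biUnion.mpr ⟨i, hi, (G.mem_neighborFinset i j).mpr hij⟩, hj⟩

theorem sq_sub_ite_mem_le (U : Finset V) (a b : ℝ) {i j : V} (hij : G.Adj i j) :
    ((if i ∈ U then a else b) - (if j ∈ U then a else b)) ^ 2 ≤
      (if i ∈ G.outerVertexBoundary U then (a - b) ^ 2 else 0) +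
        (if j ∈ G.outerVertexBoundary U then (a - b) ^ 2 else 0) := by
  have hnonneg : ∀ v, 0 ≤ if v ∈ G.outerVertexBoundary U then (a - b) ^ 2 else 0 :=
    fun v => by positivity
  by_cases hi : i ∈ U <;> by_cases hj : j ∈ U
  · simpa [hi, hj] using add_nonneg (hnonneg i) (hnonneg j)
  · rw [if_pos hi, if_neg hj, if_pos (G.mem_outerVertexBoundary_of_adj hij hi hj)]
    linarith [hnonneg i]
  · rw [if_neg hi, if_pos hj, if_pos (G.mem_outerVertexBoundary_of_adj hij.symm hj hi)]
    linarith [hnonneg j, show (b - a) ^ 2 = (a - b) ^ 2 by ring]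
  · simpa [hi, hj] using add_nonneg (hnonneg i) (hnonneg j)

theorem dotProduct_lapMatrix_mulVec_le {S : Finset V} {M : ℝ} (hM : 0 ≤ M) (x : V → ℝ)
    (hx : ∀ i j, G.Adj i j →
      (x i - x j) ^ 2 ≤ (if i ∈ S then M else 0) + (if j ∈ S then M else 0)) :
    x ⬝ᵥ (G.lapMatrix ℝ *ᵥ x) ≤ M * G.maxDegree * #S := by
  set f : V → ℝ := fun i => if i ∈ S then M else 0
  have hsymm : ∑ i, ∑ j, (if G.Adj i j then f j else 0) =
      ∑ i, ∑ j, (if G.Adj i j then f i else 0) := by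
    rw [Finset.sum_comm]
    simp only [G.adj_comm]
  have hdeg : ∑ i, G.degree i * f i ≤ M * G.maxDegree * #S := by
    simp_rw [f, mul_ite, mul_zero, Fintype.sum_ite_mem]
    calc ∑ i ∈ S, (G.degree i : ℝ) * M ≤ ∑ _i ∈ S, (G.maxDegree : ℝ) * M :=
          sum_le_sum fun i _ => by gcongr; exact G.degree_le_maxDegree i
      _ = M * G.maxDegree * #S := by rw [sum_const, nsmul_eq_mul]; ring
  rw [← toLinearMap₂'_apply', lapMatrix_toLinearMap₂']
  calc (∑ i, ∑ j, if G.Adj i j then (x i - x j) ^ 2 else 0) / 2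
      ≤ (∑ i, ∑ j, ((if G.Adj i j then f i else 0) + (if G.Adj i j then f j else 0))) / 2 := by
        gcongr with i _ j _
        split_ifs with h
        exacts [hx i j h, by simp]
    _ = ∑ i, G.degree i * f i := by
        simp only [Finset.sum_add_distrib, hsymm, sum_sum_ite_adj]
        ring
    _ ≤ M * G.maxDegree * #S := hdeg

end SimpleGraph

theorem SimpleGraph.sortedEigs_lapMatrix_one_mul_le_card_outerVertexBoundary {n : ℕ} (hn : 1 < n)
    (G : SimpleGraph (Fin n)) [DecidableRel G.Adj] (U : Finset (Fin n)) :
    sortedEigs (G.lapMatrix ℝ) (lapMatrix_isHermitian G) ⟨1, hn⟩ * (#U * (n - #U)) ≤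
      n * G.maxDegree * #(G.outerVertexBoundary U) := by
  set k : ℝ := (#U : ℝ)
  set x : Fin n → ℝ := fun v => if v ∈ U then (n : ℝ) - k else -k
  have hperp : (fun _ => (1 : ℝ)) ⬝ᵥ x = 0 := by
    simp only [x, dotProduct, one_mul, Fintype.sum_ite_mem_const, Fintype.card_fin]
    ring
  have hnorm : x ⬝ᵥ x = k * (n - k) * n := by
    have hsq : ∀ v, x v * x v = if v ∈ U then ((n : ℝ) - k) ^ 2 else k ^ 2 := fun v => by
      simp only [x]; split_ifs <;> ring
    simp only [dotProduct, hsq, Fintype.sum_ite_mem_const, Fintype.card_fin]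
    ring
  refine le_of_mul_le_mul_right ?_ (show (0 : ℝ) < n by exact_mod_cast (by omega : 0 < n))
  calc sortedEigs (G.lapMatrix ℝ) (lapMatrix_isHermitian G) ⟨1, hn⟩ * (k * (n - k)) * n
      = sortedEigs (G.lapMatrix ℝ) (lapMatrix_isHermitian G) ⟨1, hn⟩ * (x ⬝ᵥ x) := by
        rw [hnorm]; ring
    _ ≤ x ⬝ᵥ (G.lapMatrix ℝ *ᵥ x) :=
        (G.posSemidef_lapMatrix ℝ).sortedEigs_one_mul_dotProduct_self_le hn
          G.lapMatrix_mulVec_const_eq_zero (Function.ne_iff.mpr ⟨⟨0, by omega⟩, one_ne_zero⟩)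
          hperp
    _ ≤ ((n - k) - -k) ^ 2 * G.maxDegree * #(G.outerVertexBoundary U) :=
        G.dotProduct_lapMatrix_mulVec_le (sq_nonneg _) x
          fun i j hij => G.sq_sub_ite_mem_le U _ _ hij
    _ = n * G.maxDegree * #(G.outerVertexBoundary U) * n := by ring

end

/-- Every graph `G` has vertex expansion at least `λ₂(L_G)/(2Δ(G))`: every vertex
set `U` with `|U| ≤ n/2` satisfies
`|N(U) \ U| ≥ (λ₂(L_G)/(2Δ(G)))·|U|`. -/
theorem vertex_expansion_ge_lambda_two_div {n : ℕ} (hn : 1 < n)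
    (G : SimpleGraph (Fin n)) [DecidableRel G.Adj] :
    ∀ U : Finset (Fin n), 2 * U.card ≤ n →
      sortedEigs (G.lapMatrix ℝ) (lapMatrix_isHermitian G) ⟨1, hn⟩
          / (2 * G.maxDegree) * U.card
        ≤ ((U.biUnion (fun v => G.neighborFinset v)) \ U).card := by
  intro U hU
  change _ ≤ ((G.outerVertexBoundary U).card : ℝ)
  have hcut := G.sortedEigs_lapMatrix_one_mul_le_card_outerVertexBoundary hn U
  have hlam : 0 ≤ sortedEigs (G.lapMatrix ℝ) (lapMatrix_isHermitian G) ⟨1, hn⟩ :=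
    (G.posSemidef_lapMatrix ℝ).eigenvalues_nonneg _
  rcases G.maxDegree.eq_zero_or_pos with hΔ | hΔ
  · simp [hΔ] -- division by `2 * 0` makes the left side `0`
  have hU' : (n : ℝ) ≤ 2 * (n - U.card) := by
    have : (2 * U.card : ℝ) ≤ n := by exact_mod_cast hU
    linarith
  rw [div_mul_eq_mul_div, div_le_iff₀ (by positivity)]
  refine le_of_mul_le_mul_left ?_ (show (0 : ℝ) < n by exact_mod_cast (by omega : 0 < n))
  nlinarith [mul_le_mul_of_nonneg_left hU' (mul_nonneg hlam (Nat.cast_nonneg U.card))]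
end

section
/- Let G be a graph on n vertices and let H be an induced subgraph of G on m vertices. Then for all k ∈ [m], δ(H) − λ_{n−k+1}(A_G) ≤ λ_k(L_H) ≤ Δ(H) − λ_{m−k+1}(A_G), where eigenvalues are listed in non-decreasing order. -/
/-!
Write `L_H = D_H - A_H`, where `A_H` is the principal submatrix of `A_G` on the vertices of `H`.
Courant–Fischer (a dimension count against spans of sorted eigenvectors) turns
`δ(H) ≤ D_H ≤ Δ(H)`, read as quadratic forms, into the Weyl-type bounds
`δ(H) - λ_{m-k+1}(A_H) ≤ λ_k(L_H) ≤ Δ(H) - λ_{m-k+1}(A_H)`; Cauchy interlacing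
`λ_{m-k+1}(A_G) ≤ λ_{m-k+1}(A_H) ≤ λ_{n-k+1}(A_G)` then replaces `A_H` by `A_G`.
-/

open Matrix

/-- The adjacency matrix of a graph is Hermitian. -/
theorem adjMatrix_isHermitian {n : ℕ} (G : SimpleGraph (Fin n))
    [DecidableRel G.Adj] : (G.adjMatrix ℝ).IsHermitian := by
  rw [Matrix.IsHermitian, conjTranspose_eq_transpose_of_trivial]
  exact G.isSymm_adjMatrix

instance comapDecidableAdj {V W : Type*} (G : SimpleGraph W) (f : V → W)
    [h : DecidableRel G.Adj] : DecidableRel (G.comap f).Adj :=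
  fun u v => h (f u) (f v)

open Finset Function Module

theorem Submodule.exists_ne_zero_mem_inf_of_finrank_lt {K V : Type*} [DivisionRing K]
    [AddCommGroup V] [Module K V] [FiniteDimensional K V] {W₁ W₂ : Submodule K V}
    (h : finrank K V < finrank K W₁ + finrank K W₂) : ∃ x ∈ W₁ ⊓ W₂, x ≠ 0 := by
  by_contra! hx
  exact h.not_ge <| Submodule.finrank_add_finrank_le_of_disjoint <|
    Submodule.disjoint_def.mpr fun x h₁ h₂ => hx x ⟨h₁, h₂⟩

section DotProductOrthonormal

variable {n ι : Type*} [Fintype n] [Fintype ι] [DecidableEq ι] {w : ι → n → ℝ}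
  (hw : ∀ i j, w i ⬝ᵥ w j = if i = j then 1 else 0)
include hw

theorem sum_smul_dotProduct_of_orthonormal (c : ι → ℝ) (j : ι) :
    (∑ i, c i • w i) ⬝ᵥ w j = c j := by
  simp [sum_dotProduct, hw]

theorem sum_smul_dotProduct_sum_smul_of_orthonormal (c d : ι → ℝ) :
    (∑ i, c i • w i) ⬝ᵥ (∑ j, d j • w j) = ∑ i, c i * d i := by
  simp only [dotProduct_sum, dotProduct_smul, sum_smul_dotProduct_of_orthonormal hw, smul_eq_mul,
    mul_comm]

theorem linearIndependent_of_orthonormal : LinearIndependent ℝ w :=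
  Fintype.linearIndependent_iff.mpr fun c hc j => by
    simpa [hc] using (sum_smul_dotProduct_of_orthonormal hw c j).symm

variable {A : Matrix n n ℝ} {μ : ι → ℝ} (hA : ∀ i, A *ᵥ w i = μ i • w i)
include hA

theorem sum_smul_dotProduct_mulVec_of_orthonormal (c : ι → ℝ) :
    (∑ i, c i • w i) ⬝ᵥ (A *ᵥ ∑ i, c i • w i) = ∑ i, μ i * c i ^ 2 := by
  have hAc : A *ᵥ ∑ i, c i • w i = ∑ i, (μ i * c i) • w i := by
    simp only [mulVec_sum, mulVec_smul, hA, smul_smul, mul_comm]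
  rw [hAc, sum_smul_dotProduct_sum_smul_of_orthonormal hw]
  exact sum_congr rfl fun i _ => by ring

theorem dotProduct_mulVec_le_of_mem_span {b : ℝ} (hμ : ∀ i, μ i ≤ b) {x : n → ℝ}
    (hx : x ∈ Submodule.span ℝ (Set.range w)) : x ⬝ᵥ (A *ᵥ x) ≤ b * (x ⬝ᵥ x) := by
  obtain ⟨c, rfl⟩ := (Submodule.mem_span_range_iff_exists_fun ℝ).mp hx
  rw [sum_smul_dotProduct_mulVec_of_orthonormal hw hA,
    sum_smul_dotProduct_sum_smul_of_orthonormal hw, mul_sum]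
  exact sum_le_sum fun i _ => by nlinarith [hμ i, sq_nonneg (c i)]

theorem le_dotProduct_mulVec_of_mem_span {b : ℝ} (hμ : ∀ i, b ≤ μ i) {x : n → ℝ}
    (hx : x ∈ Submodule.span ℝ (Set.range w)) : b * (x ⬝ᵥ x) ≤ x ⬝ᵥ (A *ᵥ x) := by
  obtain ⟨c, rfl⟩ := (Submodule.mem_span_range_iff_exists_fun ℝ).mp hx
  rw [sum_smul_dotProduct_mulVec_of_orthonormal hw hA,
    sum_smul_dotProduct_sum_smul_of_orthonormal hw, mul_sum]
  exact sum_le_sum fun i _ => by nlinarith [hμ i, sq_nonneg (c i)]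

end DotProductOrthonormal

section SortedEigenvectors

variable {N : ℕ} {A : Matrix (Fin N) (Fin N) ℝ} (hA : A.IsHermitian)

noncomputable def sortedEigvec (i : Fin N) : Fin N → ℝ :=
  hA.eigenvectorBasis (Tuple.sort hA.eigenvalues i)

theorem sortedEigvec_dotProduct (i j : Fin N) :
    sortedEigvec hA i ⬝ᵥ sortedEigvec hA j = if i = j then 1 else 0 := by
  have h := orthonormal_iff_ite.mp hA.eigenvectorBasis.orthonormal
    (Tuple.sort hA.eigenvalues i) (Tuple.sort hA.eigenvalues j)
  simp only [EuclideanSpace.inner_eq_star_dotProduct, star_trivial,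
    EmbeddingLike.apply_eq_iff_eq] at h
  rw [dotProduct_comm]
  exact h

theorem mulVec_sortedEigvec (i : Fin N) :
    A *ᵥ sortedEigvec hA i = sortedEigs A hA i • sortedEigvec hA i :=
  hA.mulVec_eigenvectorBasis _

theorem monotone_sortedEigs : Monotone (sortedEigs A hA) :=
  Tuple.monotone_sort _

noncomputable def eigenspan (s : Finset (Fin N)) : Submodule ℝ (Fin N → ℝ) :=
  Submodule.span ℝ (Set.range fun i : s => sortedEigvec hA i)

theorem sortedEigvec_subtype_dotProduct (s : Finset (Fin N)) (i j : s) :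
    sortedEigvec hA i ⬝ᵥ sortedEigvec hA j = if i = j then 1 else 0 := by
  simp only [sortedEigvec_dotProduct, Subtype.ext_iff]

theorem finrank_eigenspan (s : Finset (Fin N)) : finrank ℝ (eigenspan hA s) = #s := by
  rw [eigenspan, finrank_span_eq_card, Fintype.card_coe]
  exact linearIndependent_of_orthonormal (sortedEigvec_subtype_dotProduct hA s)

end SortedEigenvectors

section CourantFischer

variable {N : ℕ} {A : Matrix (Fin N) (Fin N) ℝ} (hA : A.IsHermitian)

theorem dotProduct_mulVec_le_of_mem_eigenspan {s : Finset (Fin N)} {b : ℝ}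
    (hb : ∀ i ∈ s, sortedEigs A hA i ≤ b) {x : Fin N → ℝ} (hx : x ∈ eigenspan hA s) :
    x ⬝ᵥ (A *ᵥ x) ≤ b * (x ⬝ᵥ x) :=
  dotProduct_mulVec_le_of_mem_span (sortedEigvec_subtype_dotProduct hA s)
    (fun i => mulVec_sortedEigvec hA i) (fun i => hb i i.2) hx

theorem le_dotProduct_mulVec_of_mem_eigenspan {s : Finset (Fin N)} {b : ℝ}
    (hb : ∀ i ∈ s, b ≤ sortedEigs A hA i) {x : Fin N → ℝ} (hx : x ∈ eigenspan hA s) :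
    b * (x ⬝ᵥ x) ≤ x ⬝ᵥ (A *ᵥ x) :=
  le_dotProduct_mulVec_of_mem_span (sortedEigvec_subtype_dotProduct hA s)
    (fun i => mulVec_sortedEigvec hA i) (fun i => hb i i.2) hx

theorem sortedEigs_le_of_forall_mem {W : Submodule ℝ (Fin N → ℝ)} {k : Fin N}
    (hW : (k : ℕ) < finrank ℝ W) {c : ℝ} (hc : ∀ x ∈ W, x ⬝ᵥ (A *ᵥ x) ≤ c * (x ⬝ᵥ x)) :
    sortedEigs A hA k ≤ c := by
  obtain ⟨x, ⟨hxW, hxk⟩, hx0⟩ := Submodule.exists_ne_zero_mem_inf_of_finrank_lt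
    (W₁ := W) (W₂ := eigenspan hA (Ici k))
    (by rw [finrank_fin_fun, finrank_eigenspan, Fin.card_Ici]; omega)
  have hk := le_dotProduct_mulVec_of_mem_eigenspan hA
    (fun i hi => monotone_sortedEigs hA (mem_Ici.mp hi)) hxk
  exact le_of_mul_le_mul_right (hk.trans (hc x hxW))
    (by simpa using dotProduct_star_self_pos_iff.mpr hx0)

theorem le_sortedEigs_of_forall_mem {W : Submodule ℝ (Fin N → ℝ)} {k : Fin N}
    (hW : N ≤ finrank ℝ W + k) {c : ℝ} (hc : ∀ x ∈ W, c * (x ⬝ᵥ x) ≤ x ⬝ᵥ (A *ᵥ x)) :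
    c ≤ sortedEigs A hA k := by
  obtain ⟨x, ⟨hxW, hxk⟩, hx0⟩ := Submodule.exists_ne_zero_mem_inf_of_finrank_lt
    (W₁ := W) (W₂ := eigenspan hA (Iic k))
    (by rw [finrank_fin_fun, finrank_eigenspan, Fin.card_Iic]; omega)
  have hk := dotProduct_mulVec_le_of_mem_eigenspan hA
    (fun i hi => monotone_sortedEigs hA (mem_Iic.mp hi)) hxk
  exact le_of_mul_le_mul_right ((hc x hxW).trans hk)
    (by simpa using dotProduct_star_self_pos_iff.mpr hx0)

end CourantFischer

section ExtendByZero

variable {m n : Type*} {f : m → n} (hf : Injective f)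
include hf

theorem extend_zero_dotProduct {R : Type*} [CommSemiring R] [Fintype m] [Fintype n]
    (y : m → R) (x : n → R) : extend f y 0 ⬝ᵥ x = y ⬝ᵥ (x ∘ f) := by
  classical
  have hsupp : extend f y 0 ⬝ᵥ x = ∑ j ∈ univ.map ⟨f, hf⟩, extend f y 0 j * x j := by
    refine (sum_subset (subset_univ _) fun j _ hj => ?_).symm
    rw [extend_apply' _ _ _ (by simpa using hj), Pi.zero_apply, zero_mul]
  rw [hsupp, sum_map]
  simp [dotProduct, hf.extend_apply]

theorem extend_zero_dotProduct_extend_zero {R : Type*} [CommSemiring R] [Fintype m] [Fintype n]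
    (y z : m → R) : extend f y 0 ⬝ᵥ extend f z 0 = y ⬝ᵥ z := by
  rw [extend_zero_dotProduct hf, extend_comp hf]

theorem extend_zero_dotProduct_mulVec_extend_zero {R : Type*} [CommSemiring R] [Fintype m]
    [Fintype n] (A : Matrix n n R) (y z : m → R) :
    extend f y 0 ⬝ᵥ (A *ᵥ extend f z 0) = y ⬝ᵥ (A.submatrix f f *ᵥ z) := by
  rw [extend_zero_dotProduct hf]
  congr 1
  ext i
  rw [Function.comp_apply, mulVec, mulVec, dotProduct_comm, extend_zero_dotProduct hf,
    dotProduct_comm]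
  rfl

omit hf in
theorem mem_map_extendByZero {R : Type*} [Semiring R] {p : Submodule R (m → R)} {x : n → R} :
    x ∈ p.map (ExtendByZero.linearMap R f) ↔ ∃ y ∈ p, extend f y 0 = x :=
  Iff.rfl

theorem finrank_map_extendByZero {R : Type*} [Ring R] (p : Submodule R (m → R)) :
    finrank R (p.map (ExtendByZero.linearMap R f)) = finrank R p :=
  (Submodule.equivMapOfInjective _ (extend_injective hf (0 : n → R)) p).finrank_eq.symm

end ExtendByZero

section CauchyInterlacing

variable {m n : ℕ} {A : Matrix (Fin n) (Fin n) ℝ} {B : Matrix (Fin m) (Fin m) ℝ}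
  (hA : A.IsHermitian) (hB : B.IsHermitian) {f : Fin m → Fin n} (hf : Injective f)
  (hAB : A.submatrix f f = B)
include hf hAB

theorem sortedEigs_le_sortedEigs_submatrix {i : Fin n} {j : Fin m} (hij : (i : ℕ) ≤ j) :
    sortedEigs A hA i ≤ sortedEigs B hB j := by
  subst hAB
  refine sortedEigs_le_of_forall_mem hA
    (W := (eigenspan hB (Iic j)).map (ExtendByZero.linearMap ℝ f)) ?_ ?_
  · rw [finrank_map_extendByZero hf, finrank_eigenspan, Fin.card_Iic]
    omega
  · intro _ hx
    obtain ⟨y, hy, rfl⟩ := mem_map_extendByZero.mp hx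
    rw [extend_zero_dotProduct_mulVec_extend_zero hf,
      extend_zero_dotProduct_extend_zero hf]
    exact dotProduct_mulVec_le_of_mem_eigenspan hB
      (fun l hl => monotone_sortedEigs hB (mem_Iic.mp hl)) hy

theorem sortedEigs_submatrix_le_sortedEigs {i : Fin n} {j : Fin m}
    (hij : (j : ℕ) + n ≤ i + m) : sortedEigs B hB j ≤ sortedEigs A hA i := by
  subst hAB
  refine le_sortedEigs_of_forall_mem hA
    (W := (eigenspan hB (Ici j)).map (ExtendByZero.linearMap ℝ f)) ?_ ?_
  · rw [finrank_map_extendByZero hf, finrank_eigenspan, Fin.card_Ici]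
    omega
  · intro _ hx
    obtain ⟨y, hy, rfl⟩ := mem_map_extendByZero.mp hx
    rw [extend_zero_dotProduct_mulVec_extend_zero hf,
      extend_zero_dotProduct_extend_zero hf]
    exact le_dotProduct_mulVec_of_mem_eigenspan hB
      (fun l hl => monotone_sortedEigs hB (mem_Ici.mp hl)) hy

end CauchyInterlacing

section Weyl

variable {N : ℕ} {D B : Matrix (Fin N) (Fin N) ℝ} (hDB : (D - B).IsHermitian)
  (hB : B.IsHermitian) {d : ℝ}

theorem sortedEigs_sub_le (hD : ∀ x, x ⬝ᵥ (D *ᵥ x) ≤ d * (x ⬝ᵥ x)) {i j : Fin N}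
    (hij : (i : ℕ) + j < N) : sortedEigs (D - B) hDB i ≤ d - sortedEigs B hB j := by
  refine sortedEigs_le_of_forall_mem hDB (W := eigenspan hB (Ici j))
    (by rw [finrank_eigenspan, Fin.card_Ici]; omega) fun x hx => ?_
  have hBx := le_dotProduct_mulVec_of_mem_eigenspan hB
    (fun l hl => monotone_sortedEigs hB (mem_Ici.mp hl)) hx
  rw [sub_mulVec, dotProduct_sub, sub_mul]
  linarith [hD x]

theorem le_sortedEigs_sub (hD : ∀ x, d * (x ⬝ᵥ x) ≤ x ⬝ᵥ (D *ᵥ x)) {i j : Fin N}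
    (hij : N ≤ (i : ℕ) + j + 1) : d - sortedEigs B hB j ≤ sortedEigs (D - B) hDB i := by
  refine le_sortedEigs_of_forall_mem hDB (W := eigenspan hB (Iic j))
    (by rw [finrank_eigenspan, Fin.card_Iic]; omega) fun x hx => ?_
  have hBx := dotProduct_mulVec_le_of_mem_eigenspan hB
    (fun l hl => monotone_sortedEigs hB (mem_Iic.mp hl)) hx
  rw [sub_mulVec, dotProduct_sub, sub_mul]
  linarith [hD x]

end Weyl

namespace SimpleGraph

theorem adjMatrix_comap (R : Type*) [Zero R] [One R] {V W : Type*} (G : SimpleGraph W)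
    [DecidableRel G.Adj] (f : V → W) :
    (G.comap f).adjMatrix R = (G.adjMatrix R).submatrix f f := by
  ext i j
  simp [adjMatrix_apply]

variable {V : Type*} [Fintype V] [DecidableEq V] (G : SimpleGraph V) [DecidableRel G.Adj]

theorem dotProduct_degMatrix_mulVec (x : V → ℝ) :
    x ⬝ᵥ (G.degMatrix ℝ *ᵥ x) = ∑ v, (G.degree v : ℝ) * (x v * x v) := by
  simp only [degMatrix, dotProduct, mulVec_diagonal]
  exact sum_congr rfl fun v _ => by ring

theorem dotProduct_degMatrix_mulVec_le (x : V → ℝ) :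
    x ⬝ᵥ (G.degMatrix ℝ *ᵥ x) ≤ G.maxDegree * (x ⬝ᵥ x) := by
  rw [dotProduct_degMatrix_mulVec, dotProduct, mul_sum]
  gcongr with v
  · exact mul_self_nonneg _
  · exact_mod_cast G.degree_le_maxDegree v

theorem minDegree_mul_dotProduct_le (x : V → ℝ) :
    G.minDegree * (x ⬝ᵥ x) ≤ x ⬝ᵥ (G.degMatrix ℝ *ᵥ x) := by
  rw [dotProduct_degMatrix_mulVec, dotProduct, mul_sum]
  gcongr with v
  · exact mul_self_nonneg _
  · exact_mod_cast G.minDegree_le_degree v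

end SimpleGraph

/-- Indices are 0-based: `k : Fin m` stands for the informal `k + 1`, and `n - 1 - k`, `m - 1 - k`
are the positions of `λ_{n-k}`, `λ_{m-k}`. -/
theorem lap_eigenvalues_induced_subgraph {n m : ℕ}
    (G : SimpleGraph (Fin n)) [DecidableRel G.Adj] (f : Fin m ↪ Fin n)
    (k : Fin m) :
    (((G.comap f).minDegree : ℝ) -
        sortedEigs (G.adjMatrix ℝ) (adjMatrix_isHermitian G)
          ⟨n - 1 - k.val, by have := k.isLt; have : m ≤ n := Fintype.card_fin m ▸ Fintype.card_fin n ▸ Fintype.card_le_of_embedding f; omega⟩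
      ≤ sortedEigs ((G.comap f).lapMatrix ℝ) (lapMatrix_isHermitian (G.comap f)) k)
    ∧ (sortedEigs ((G.comap f).lapMatrix ℝ) (lapMatrix_isHermitian (G.comap f)) k
      ≤ ((G.comap f).maxDegree : ℝ) -
        sortedEigs (G.adjMatrix ℝ) (adjMatrix_isHermitian G)
          ⟨m - 1 - k.val, by have := k.isLt; have : m ≤ n := Fintype.card_fin m ▸ Fintype.card_fin n ▸ Fintype.card_le_of_embedding f; omega⟩) := by
  have hmn : m ≤ n := by simpa using Fintype.card_le_of_embedding f
  have hk := k.isLt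
  set H := G.comap f
  have hHG : (G.adjMatrix ℝ).submatrix f f = H.adjMatrix ℝ := (G.adjMatrix_comap ℝ f).symm
  have hAH := adjMatrix_isHermitian H
  let j : Fin m := ⟨m - 1 - k, by omega⟩
  constructor
  · calc _ ≤ (H.minDegree : ℝ) - sortedEigs _ hAH j := by
          gcongr
          exact sortedEigs_submatrix_le_sortedEigs _ hAH f.injective hHG
            (by simp [j]; omega)
      _ ≤ _ := le_sortedEigs_sub (lapMatrix_isHermitian H) hAH H.minDegree_mul_dotProduct_le
          (by simp [j]; omega)
  · calc _ ≤ (H.maxDegree : ℝ) - sortedEigs _ hAH j :=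
          sortedEigs_sub_le (lapMatrix_isHermitian H) hAH H.dotProduct_degMatrix_mulVec_le
            (by simp [j]; omega)
      _ ≤ _ := by
          gcongr
          exact sortedEigs_le_sortedEigs_submatrix _ hAH f.injective hHG (by simp [j])
end

section
/- Let A and B be n×n Hermitian matrices. Then for all k ∈ [n], λ_k(A) + λ₁(B) ≤ λ_k(A+B) ≤ λ_k(A) + λ_n(B), where λ₁ ≤ ... ≤ λ_n denote eigenvalues in non-decreasing order. -/
open Matrix

/-- The eigenvalues of a complex Hermitian matrix, listed in non-decreasing order. -/
noncomputable def sortedEigsC {n : ℕ} (A : Matrix (Fin n) (Fin n) ℂ)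
    (hA : A.IsHermitian) : Fin n → ℝ :=
  hA.eigenvalues ∘ Tuple.sort hA.eigenvalues

/-!
Courant–Fischer in its simplest form: if `T` has an orthonormal eigenbasis with eigenvalues
`μ 0 ≤ ⋯ ≤ μ (n-1)`, then the Rayleigh form `re ⟪T x, x⟫` is at most `μ k ‖x‖²` on the
`(k+1)`-dimensional span of the first `k+1` eigenvectors and at least `μ k ‖x‖²` on the
`(n-k)`-dimensional span of the last `n-k`. For `T₁ + T₂`, take the first kind of subspace for `T₁`
and the second for `T₁ + T₂`: their dimensions add up to `n + 1`, so they share a nonzero vector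
`x`, and evaluating both Rayleigh forms at `x` gives `μ_k(T₁ + T₂) ≤ μ_k(T₁) + max μ(T₂)`. The lower
bound is symmetric.
-/

open Module Submodule

theorem le_of_finrank_lt_add {K V : Type*} [Field K] [NormedAddCommGroup V] [Module K V]
    [FiniteDimensional K V] {U W : Submodule K V} (hUW : finrank K V < finrank K U + finrank K W)
    {f : V → ℝ} {a c : ℝ} (hU : ∀ x ∈ U, f x ≤ a * ‖x‖ ^ 2) (hW : ∀ x ∈ W, c * ‖x‖ ^ 2 ≤ f x) :
    c ≤ a := by
  have hUW' : ¬Disjoint U W := fun h => (finrank_add_finrank_le_of_disjoint h).not_gt hUW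
  obtain ⟨x, hxU, hxW, hx⟩ : ∃ x ∈ U, x ∈ W ∧ x ≠ 0 := by
    simpa [Submodule.disjoint_def] using hUW'
  have hx2 : 0 < ‖x‖ ^ 2 := by positivity
  exact le_of_mul_le_mul_right ((hW x hxW).trans (hU x hxU)) hx2

variable {𝕜 : Type*} [RCLike 𝕜] {E : Type*} [NormedAddCommGroup E] [InnerProductSpace 𝕜 E]

namespace OrthonormalBasis

section Eigenbasis

variable {ι : Type*} [Fintype ι] (b : OrthonormalBasis ι 𝕜 E) {T : E →ₗ[𝕜] E} {μ : ι → ℝ}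

theorem repr_apply_of_apply_eq_smul (hT : ∀ i, T (b i) = (μ i : 𝕜) • b i) (x : E) (i : ι) :
    b.repr (T x) i = μ i * b.repr x i := by
  classical
  conv_lhs => rw [← b.sum_repr x]
  simp [hT, Finset.sum_apply, Pi.single_apply, RCLike.real_smul_eq_coe_mul, mul_comm]

theorem re_inner_apply_self_eq_sum (hT : ∀ i, T (b i) = (μ i : 𝕜) • b i) (x : E) :
    RCLike.re (inner 𝕜 (T x) x) = ∑ i, μ i * ‖b.repr x i‖ ^ 2 := by
  rw [← b.repr.inner_map_map, PiLp.inner_apply, map_sum]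
  refine Finset.sum_congr rfl fun i _ => ?_
  rw [b.repr_apply_of_apply_eq_smul hT, ← smul_eq_mul, inner_smul_real_left,
    inner_self_eq_norm_sq_to_K]
  simp [RCLike.real_smul_eq_coe_mul]

theorem repr_eq_zero_of_mem_span_image {S : Set ι} {x : E} (hx : x ∈ span 𝕜 (b '' S)) {i : ι}
    (hi : i ∉ S) : b.repr x i = 0 := by
  rw [← b.coe_toBasis, Basis.mem_span_image] at hx
  rw [← b.coe_toBasis_repr_apply]
  exact Finsupp.notMem_support_iff.mp fun h => hi (hx h)

theorem re_inner_apply_self_le_of_mem_span (hT : ∀ i, T (b i) = (μ i : 𝕜) • b i) {S : Set ι}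
    {M : ℝ} (hM : ∀ i ∈ S, μ i ≤ M) {x : E} (hx : x ∈ span 𝕜 (b '' S)) :
    RCLike.re (inner 𝕜 (T x) x) ≤ M * ‖x‖ ^ 2 := by
  rw [b.re_inner_apply_self_eq_sum hT, ← b.repr.norm_map, EuclideanSpace.norm_sq_eq,
    Finset.mul_sum]
  refine Finset.sum_le_sum fun i _ => ?_
  by_cases hi : i ∈ S
  · exact mul_le_mul_of_nonneg_right (hM i hi) (sq_nonneg _)
  · simp [b.repr_eq_zero_of_mem_span_image hx hi]

theorem le_re_inner_apply_self_of_mem_span (hT : ∀ i, T (b i) = (μ i : 𝕜) • b i) {S : Set ι}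
    {m : ℝ} (hm : ∀ i ∈ S, m ≤ μ i) {x : E} (hx : x ∈ span 𝕜 (b '' S)) :
    m * ‖x‖ ^ 2 ≤ RCLike.re (inner 𝕜 (T x) x) := by
  have hT' : ∀ i, (-T) (b i) = ((-μ i : ℝ) : 𝕜) • b i := by simp [hT]
  have h := b.re_inner_apply_self_le_of_mem_span hT' (M := -m) (fun i hi => neg_le_neg (hm i hi)) hx
  simp only [LinearMap.neg_apply, inner_neg_left, map_neg] at h
  linarith

theorem mem_span_image_univ (x : E) : x ∈ span 𝕜 (b '' Set.univ) := by
  rw [Set.image_univ, ← b.coe_toBasis, b.toBasis.span_eq]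
  exact mem_top

theorem finrank_span_image (S : Finset ι) : finrank 𝕜 (span 𝕜 (b '' S)) = S.card := by
  classical
  rw [← Finset.coe_image, finrank_span_finset_eq_card,
    Finset.card_image_of_injective _ b.orthonormal.linearIndependent.injective]
  simpa using (b.orthonormal.linearIndependent.linearIndepOn S).id_image

end Eigenbasis

section SortedEigenbasis

variable {n : ℕ} (b : OrthonormalBasis (Fin n) 𝕜 E) {T : E →ₗ[𝕜] E} {μ : Fin n → ℝ}

theorem exists_finrank_eq_forall_re_inner_apply_self_le (hT : ∀ i, T (b i) = (μ i : 𝕜) • b i)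
    (hμ : Monotone μ) (k : Fin n) :
    ∃ U : Submodule 𝕜 E, finrank 𝕜 U = k + 1 ∧
      ∀ x ∈ U, RCLike.re (inner 𝕜 (T x) x) ≤ μ k * ‖x‖ ^ 2 :=
  ⟨span 𝕜 (b '' (Finset.Iic k : Finset (Fin n))), by rw [b.finrank_span_image, Fin.card_Iic],
    fun _ hx => b.re_inner_apply_self_le_of_mem_span hT
      (fun _ hi => hμ (Finset.mem_Iic.mp hi)) hx⟩

theorem exists_finrank_eq_forall_le_re_inner_apply_self (hT : ∀ i, T (b i) = (μ i : 𝕜) • b i)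
    (hμ : Monotone μ) (k : Fin n) :
    ∃ W : Submodule 𝕜 E, finrank 𝕜 W = n - k ∧
      ∀ x ∈ W, μ k * ‖x‖ ^ 2 ≤ RCLike.re (inner 𝕜 (T x) x) :=
  ⟨span 𝕜 (b '' (Finset.Ici k : Finset (Fin n))), by rw [b.finrank_span_image, Fin.card_Ici],
    fun _ hx => b.le_re_inner_apply_self_of_mem_span hT
      (fun _ hi => hμ (Finset.mem_Ici.mp hi)) hx⟩

end SortedEigenbasis

end OrthonormalBasis

section Weyl

variable {n : ℕ} {T₁ T₂ : E →ₗ[𝕜] E} {b₁ b : OrthonormalBasis (Fin n) 𝕜 E} {μ₁ μ : Fin n → ℝ}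

theorem weyl_upper_bound (h₁ : ∀ i, T₁ (b₁ i) = (μ₁ i : 𝕜) • b₁ i) (hμ₁ : Monotone μ₁)
    (h : ∀ i, (T₁ + T₂) (b i) = (μ i : 𝕜) • b i) (hμ : Monotone μ) {M : ℝ}
    (hM : ∀ x, RCLike.re (inner 𝕜 (T₂ x) x) ≤ M * ‖x‖ ^ 2) (k : Fin n) :
    μ k ≤ μ₁ k + M := by
  have := Module.Finite.of_basis b.toBasis
  obtain ⟨U, hU, hTU⟩ := b₁.exists_finrank_eq_forall_re_inner_apply_self_le h₁ hμ₁ k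
  obtain ⟨W, hW, hTW⟩ := b.exists_finrank_eq_forall_le_re_inner_apply_self h hμ k
  have hdim : finrank 𝕜 E < finrank 𝕜 U + finrank 𝕜 W := by
    rw [finrank_eq_card_basis b.toBasis, Fintype.card_fin, hU, hW]
    omega
  refine le_of_finrank_lt_add hdim (fun x hx => ?_) hTW
  simp only [LinearMap.add_apply, inner_add_left, map_add]
  linarith [hTU x hx, hM x]

theorem weyl_lower_bound (h₁ : ∀ i, T₁ (b₁ i) = (μ₁ i : 𝕜) • b₁ i) (hμ₁ : Monotone μ₁)
    (h : ∀ i, (T₁ + T₂) (b i) = (μ i : 𝕜) • b i) (hμ : Monotone μ) {m : ℝ}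
    (hm : ∀ x, m * ‖x‖ ^ 2 ≤ RCLike.re (inner 𝕜 (T₂ x) x)) (k : Fin n) :
    μ₁ k + m ≤ μ k := by
  have := Module.Finite.of_basis b.toBasis
  obtain ⟨U, hU, hTU⟩ := b.exists_finrank_eq_forall_re_inner_apply_self_le h hμ k
  obtain ⟨W, hW, hTW⟩ := b₁.exists_finrank_eq_forall_le_re_inner_apply_self h₁ hμ₁ k
  have hdim : finrank 𝕜 E < finrank 𝕜 U + finrank 𝕜 W := by
    rw [finrank_eq_card_basis b.toBasis, Fintype.card_fin, hU, hW]
    omega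
  refine le_of_finrank_lt_add hdim hTU (fun x hx => ?_)
  simp only [LinearMap.add_apply, inner_add_left, map_add]
  linarith [hTW x hx, hm x]

end Weyl

theorem Matrix.IsHermitian.toEuclideanLin_eigenvectorBasis {m : Type*} [Fintype m]
    [DecidableEq m] {A : Matrix m m 𝕜} (hA : A.IsHermitian) (i : m) :
    toEuclideanLin A (hA.eigenvectorBasis i) = (hA.eigenvalues i : 𝕜) • hA.eigenvectorBasis i := by
  ext1
  rw [ofLp_toLpLin, toLin'_apply, hA.mulVec_eigenvectorBasis, WithLp.ofLp_smul,
    RCLike.real_smul_eq_coe_smul (K := 𝕜)]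

namespace Matrix.IsHermitian

variable {n : ℕ} {A : Matrix (Fin n) (Fin n) ℂ}

noncomputable def sortedEigenvectorBasis (hA : A.IsHermitian) :
    OrthonormalBasis (Fin n) ℂ (EuclideanSpace ℂ (Fin n)) :=
  hA.eigenvectorBasis.reindex (Tuple.sort hA.eigenvalues).symm

theorem toEuclideanLin_sortedEigenvectorBasis (hA : A.IsHermitian) (j : Fin n) :
    toEuclideanLin A (hA.sortedEigenvectorBasis j) =
      (sortedEigsC A hA j : ℂ) • hA.sortedEigenvectorBasis j := by
  simp only [sortedEigenvectorBasis, OrthonormalBasis.reindex_apply, Equiv.symm_symm]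
  exact hA.toEuclideanLin_eigenvectorBasis _

theorem monotone_sortedEigsC (hA : A.IsHermitian) : Monotone (sortedEigsC A hA) :=
  Tuple.monotone_sort _

theorem re_inner_toEuclideanLin_le (hA : A.IsHermitian) (hn : 0 < n)
    (x : EuclideanSpace ℂ (Fin n)) :
    RCLike.re (inner ℂ (toEuclideanLin A x) x) ≤
      sortedEigsC A hA ⟨n - 1, Nat.sub_lt hn Nat.one_pos⟩ * ‖x‖ ^ 2 :=
  hA.sortedEigenvectorBasis.re_inner_apply_self_le_of_mem_span
    hA.toEuclideanLin_sortedEigenvectorBasis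
    (fun i _ => hA.monotone_sortedEigsC (Fin.le_def.mpr (Nat.le_sub_one_of_lt i.isLt)))
    (OrthonormalBasis.mem_span_image_univ _ x)

theorem le_re_inner_toEuclideanLin (hA : A.IsHermitian) (hn : 0 < n)
    (x : EuclideanSpace ℂ (Fin n)) :
    sortedEigsC A hA ⟨0, hn⟩ * ‖x‖ ^ 2 ≤ RCLike.re (inner ℂ (toEuclideanLin A x) x) :=
  hA.sortedEigenvectorBasis.le_re_inner_apply_self_of_mem_span
    hA.toEuclideanLin_sortedEigenvectorBasis
    (fun _ _ => hA.monotone_sortedEigsC (Fin.le_def.mpr (Nat.zero_le _)))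
    (OrthonormalBasis.mem_span_image_univ _ x)

end Matrix.IsHermitian

/-- Weyl's inequality: for `n×n` Hermitian matrices `A` and `B` and every `k`,
`λ_k(A) + λ₁(B) ≤ λ_k(A+B) ≤ λ_k(A) + λ_n(B)`, eigenvalues in
non-decreasing order. -/
theorem weyl_inequality {n : ℕ} (hn : 0 < n)
    (A B : Matrix (Fin n) (Fin n) ℂ)
    (hA : A.IsHermitian) (hB : B.IsHermitian) :
    ∀ k : Fin n,
      sortedEigsC A hA k + sortedEigsC B hB ⟨0, hn⟩
          ≤ sortedEigsC (A + B) (hA.add hB) k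
      ∧ sortedEigsC (A + B) (hA.add hB) k
          ≤ sortedEigsC A hA k + sortedEigsC B hB ⟨n - 1, by omega⟩ := by
  intro k
  have hAB : ∀ i, (toEuclideanLin A + toEuclideanLin B) ((hA.add hB).sortedEigenvectorBasis i) =
      (sortedEigsC (A + B) (hA.add hB) i : ℂ) • (hA.add hB).sortedEigenvectorBasis i := by
    simpa only [map_add] using (hA.add hB).toEuclideanLin_sortedEigenvectorBasis
  exact ⟨weyl_lower_bound hA.toEuclideanLin_sortedEigenvectorBasis hA.monotone_sortedEigsC hAB
      (hA.add hB).monotone_sortedEigsC (hB.le_re_inner_toEuclideanLin hn) k,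
    weyl_upper_bound hA.toEuclideanLin_sortedEigenvectorBasis hA.monotone_sortedEigsC hAB
      (hA.add hB).monotone_sortedEigsC (hB.re_inner_toEuclideanLin_le hn) k⟩
end

section
/- Let G be any graph and let C be a shortest odd cycle in G. Then there is no path p in G connecting two vertices u, v on C such that both of the two arcs of C between u and v are strictly longer than p. -/
/-!
A closed walk of odd length contains an odd cycle no longer than itself: where a vertex repeats,
the walk splits into two shorter closed walks, one of which is odd. If `p` were shorter than both
arcs of `C`, then `p` closed up by one of the arcs would be an odd closed walk shorter than `C`.
-/

namespace SimpleGraph.Walk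

variable {V : Type*} {G : SimpleGraph V}

theorem exists_eq_append_append_of_not_isPath {u v : V} (w : G.Walk u v) (hw : ¬ w.IsPath) :
    ∃ (y : V) (p : G.Walk u y) (q : G.Walk y y) (r : G.Walk y v),
      ¬ q.Nil ∧ w = p.append (q.append r) := by
  classical
  induction w with
  | nil => exact absurd IsPath.nil hw
  | @cons u _ _ h t ih =>
    by_cases ht : t.IsPath
    · have hu : u ∈ t.support := by simpa [cons_isPath_iff, ht] using hw
      exact ⟨u, nil, cons h (t.takeUntil u hu), t.dropUntil u hu, not_nil_cons,
        by simp [t.take_spec hu]⟩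
    · obtain ⟨y, p, q, r, hq, rfl⟩ := ih ht
      exact ⟨y, cons h p, q, r, hq, rfl⟩

theorem exists_isCycle_odd_length_le {x : V} (w : G.Walk x x) (hw : Odd w.length) :
    ∃ (y : V) (c : G.Walk y y), c.IsCycle ∧ Odd c.length ∧ c.length ≤ w.length := by
  induction hn : w.length using Nat.strong_induction_on generalizing x with
  | _ n ih =>
  subst hn
  cases w with
  | nil => simp at hw
  | @cons _ z _ h t =>
    by_cases ht : t.IsPath
    · refine ⟨x, cons h t, isCycle_iff_isPath_tail_and_le_length.2 ⟨by simpa using ht, ?_⟩,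
        hw, le_rfl⟩
      have ht0 : t.length ≠ 0 := fun h0 ↦ G.loopless.irrefl x (eq_of_length_eq_zero h0 ▸ h)
      rw [length_cons, Nat.odd_iff] at hw
      rw [length_cons]
      omega
    · obtain ⟨y, p, q, r, hq, rfl⟩ := t.exists_eq_append_append_of_not_isPath ht
      have hq0 : q.length ≠ 0 := mt length_eq_zero_iff.1 hq
      have hlen : (cons h (p.append (q.append r))).length =
          (cons h (p.append r)).length + q.length := by
        simp only [length_cons, length_append]; omega
      have hpos : 0 < (cons h (p.append r)).length := Nat.succ_pos _
      rw [hlen] at hw ih ⊢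
      rcases Nat.even_or_odd q.length with hqe | hqo
      · obtain ⟨y', c, hc, hco, hcl⟩ := ih _ (by omega) _ ((Nat.odd_add.1 hw).2 hqe) rfl
        exact ⟨y', c, hc, hco, by omega⟩
      · obtain ⟨y', c, hc, hco, hcl⟩ := ih _ (by omega) q hqo rfl
        exact ⟨y', c, hc, hco, by omega⟩

theorem length_le_of_odd_of_forall_isCycle {n : ℕ}
    (hn : ∀ {y : V} (c : G.Walk y y), c.IsCycle → Odd c.length → n ≤ c.length)
    {x : V} (w : G.Walk x x) (hw : Odd w.length) : n ≤ w.length :=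
  let ⟨_, c, hc, hco, hcw⟩ := w.exists_isCycle_odd_length_le hw
  (hn c hc hco).trans hcw

end SimpleGraph.Walk

open SimpleGraph.Walk in
theorem shortest_odd_cycle_no_shortcut_general {V : Type*} [DecidableEq V]
    (G : SimpleGraph V) {x : V} (c : G.Walk x x)
    (hodd : Odd c.length)
    (hmin : ∀ {y : V} (d : G.Walk y y), d.IsCycle → Odd d.length →
      c.length ≤ d.length)
    {u v : V} (hu : u ∈ c.support) (hv : v ∈ (c.rotate u hu).support)
    (p : G.Walk u v) :
    ¬ (p.length < ((c.rotate u hu).takeUntil v hv).length ∧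
       p.length < ((c.rotate u hu).dropUntil v hv).length) := by
  rintro ⟨ha, hb⟩
  set a := (c.rotate u hu).takeUntil v hv
  set b := (c.rotate u hu).dropUntil v hv
  have hab : a.length + b.length = c.length := by
    rw [← length_append, take_spec, length_rotate]
  -- closing `p` up with either arc gives two closed walks of total length `c.length + 2 p.length`
  have hsplit : Odd (a.append p.reverse).length ∨ Odd (p.append b).length := by
    simp only [length_append, length_reverse, Nat.odd_iff] at hodd ⊢
    omega
  rcases hsplit with hw | hw
  · have := length_le_of_odd_of_forall_isCycle hmin _ hw
    simp only [length_append, length_reverse] at this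
    omega
  · have := length_le_of_odd_of_forall_isCycle hmin _ hw
    simp only [length_append] at this
    omega

/-- Let `C` be a shortest odd cycle in a graph `G`.  Then there is no path `p`
connecting two vertices `u, v` on `C` such that both arcs of `C` between `u`
and `v` are strictly longer than `p`.  The two arcs are obtained by rotating
the cycle to start at `u` and splitting it at `v`. -/
theorem shortest_odd_cycle_no_shortcut {V : Type*} [DecidableEq V]
    (G : SimpleGraph V) {x : V} (c : G.Walk x x)
    (hc : c.IsCycle) (hodd : Odd c.length)
    (hmin : ∀ {y : V} (d : G.Walk y y), d.IsCycle → Odd d.length →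
      c.length ≤ d.length)
    {u v : V} (hu : u ∈ c.support) (hv : v ∈ (c.rotate u hu).support)
    (p : G.Walk u v) (hp : p.IsPath) :
    ¬ (p.length < ((c.rotate u hu).takeUntil v hv).length ∧
       p.length < ((c.rotate u hu).dropUntil v hv).length) :=
  shortest_odd_cycle_no_shortcut_general G c hodd hmin hu hv p
end

section
/- Let G be an α-expander on n vertices and let A, B ⊆ V(G) be vertex sets with |A|, |B| ≥ t for some t > 0. Then G contains at least tα/(1+α) pairwise vertex-disjoint paths, each having one endpoint in A and the other in B. -/
/-!
By Menger's theorem it suffices to show that every set `S` separating `A` from `B` has at least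
`tα/(1+α)` vertices. The vertices reachable from `A \ S` and from `B \ S` in `G - S` form two
disjoint sets, so one of them, `X`, has at most `n/2` vertices. Its outer neighbourhood lies in
`S`, so `α|X| ≤ |S|`, while `t ≤ |X| + |S|`; hence `tα ≤ (1+α)|S|`.

Menger's theorem for finite digraphs follows by induction on the number of arcs. When an arc
`x → y` is added to `R`, either the minimum size `k` of an `A`–`B` separator does not grow, or `R`
has an `A`–`B` separator `S` with `|S| = k - 1`, and then `S + x` and `S + y` separate `A` from `B`
after the addition. By induction, `R` has `k` disjoint paths from `A` to `S + x` and `k` disjoint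
paths from `S + y` to `B`. Cut them at their first, resp. last, visit to these sets: then they
can only meet in `S`, and they glue to `k` disjoint `A`–`B` paths.
-/

open Finset List

theorem List.exists_eq_append_cons_of_exists_mem {α : Type*} {P : α → Prop} [DecidablePred P]
    {l : List α} (h : ∃ t ∈ l, P t) : ∃ p t s, l = p ++ t :: s ∧ P t ∧ ∀ v ∈ p, ¬P v := by
  obtain ⟨t, ht⟩ := Option.isSome_iff_exists.1 (find?_isSome.2 (by simpa using h) :
    (l.find? (P ·)).isSome)
  obtain ⟨hPt, p, s, rfl, hp⟩ := find?_eq_some_iff_append.1 ht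
  exact ⟨p, t, s, rfl, by simpa using hPt, fun v hv => by simpa using hp v hv⟩

namespace Menger

variable {V : Type*} {R Q : V → V → Prop} {A B S T X Y : Finset V} {l : List V} {k : ℕ}
  {x y : V}

/-- A walk of the digraph `R` is a list of vertices; it may repeat vertices. -/
structure IsWalk (R : V → V → Prop) (A B : Finset V) (l : List V) : Prop where
  isChain : l.IsChain R
  head_mem : ∃ a ∈ A, l.head? = some a
  getLast_mem : ∃ b ∈ B, l.getLast? = some b

def Separates (R : V → V → Prop) (A B S : Finset V) : Prop :=
  ∀ l, IsWalk R A B l → ∃ s ∈ S, s ∈ l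

structure IsLinkage (R : V → V → Prop) (A B : Finset V) (P : Fin k → List V) : Prop where
  isWalk : ∀ i, IsWalk R A B (P i)
  pairwise_disjoint : Pairwise fun i j => (P i).Disjoint (P j)

def HasMengerProperty (R : V → V → Prop) : Prop :=
  ∀ (A B : Finset V) (k : ℕ), (∀ S, Separates R A B S → k ≤ S.card) →
    ∃ P : Fin k → List V, IsLinkage R A B P

def addArc (R : V → V → Prop) (x y : V) : V → V → Prop :=
  fun u w => R u w ∨ (u = x ∧ w = y)

section Walks

theorem IsWalk.mono (h : IsWalk R A B l) (hRQ : ∀ ⦃u w⦄, R u w → Q u w) : IsWalk Q A B l :=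
  ⟨h.isChain.imp hRQ, h.head_mem, h.getLast_mem⟩

theorem IsLinkage.mono {P : Fin k → List V} (h : IsLinkage R A B P)
    (hRQ : ∀ ⦃u w⦄, R u w → Q u w) : IsLinkage Q A B P :=
  ⟨fun i => (h.isWalk i).mono hRQ, h.pairwise_disjoint⟩

theorem IsWalk.getLast?_eq {u : V} (h : IsWalk R A {u} l) : l.getLast? = some u := by
  obtain ⟨b, hb, hlb⟩ := h.getLast_mem
  rwa [Finset.mem_singleton.1 hb] at hlb

theorem IsWalk.mem_of_cons {c : V} {q : List V} (h : IsWalk R A B (c :: q)) : c ∈ A := by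
  obtain ⟨a, ha, hca⟩ := h.head_mem
  obtain rfl : c = a := by simpa using hca
  exact ha

theorem IsWalk.mem_of_concat {p : List V} {e : V} (h : IsWalk R A B (p ++ [e])) : e ∈ B := by
  obtain ⟨b, hb, hlb⟩ := h.getLast_mem
  obtain rfl : e = b := by simpa using hlb
  exact hb

theorem IsWalk.reverse (h : IsWalk R A B l) : IsWalk (flip R) B A l.reverse :=
  ⟨isChain_reverse.2 h.isChain, by simpa using h.getLast_mem, by simpa using h.head_mem⟩

theorem separates_flip_iff : Separates (flip R) B A S ↔ Separates R A B S :=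
  ⟨fun h l hl => by simpa using h _ hl.reverse, fun h l hl => by simpa using h _ hl.reverse⟩

theorem IsLinkage.reverse {P : Fin k → List V} (h : IsLinkage R A B P) :
    IsLinkage (flip R) B A fun i => (P i).reverse :=
  ⟨fun i => (h.isWalk i).reverse, fun _ _ hij => by simpa using h.pairwise_disjoint hij⟩

theorem HasMengerProperty.flip (h : HasMengerProperty R) : HasMengerProperty (flip R) := by
  intro A B k hk
  obtain ⟨P, hP⟩ := h B A k fun S hS => hk S (separates_flip_iff.2 hS)
  exact ⟨_, hP.reverse⟩

theorem IsWalk.splice {l₁ l₂ m₁ m₂ : List V} {v : V} (h₁ : IsWalk R A X (l₁ ++ v :: l₂))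
    (h₂ : IsWalk R Y B (m₁ ++ v :: m₂)) : IsWalk R A B (l₁ ++ v :: m₂) :=
  ⟨isChain_split.2 ⟨(isChain_split.1 h₁.isChain).1, (isChain_split.1 h₂.isChain).2⟩,
    by simpa using h₁.head_mem, by simpa using h₂.getLast_mem⟩

theorem IsWalk.append {l₁ l₂ : List V} (h₁ : IsWalk R A X l₁) (h₂ : IsWalk R Y B l₂)
    (h : ∀ u ∈ l₁.getLast?, ∀ w ∈ l₂.head?, R u w) : IsWalk R A B (l₁ ++ l₂) := by
  obtain ⟨a, ha, hl₁⟩ := h₁.head_mem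
  obtain ⟨b, hb, hl₂⟩ := h₂.getLast_mem
  exact ⟨h₁.isChain.append h₂.isChain h, ⟨a, ha, by simp [hl₁]⟩, ⟨b, hb, by simp [hl₂]⟩⟩

theorem IsWalk.join {p q : List V} {e c : V} (ha : IsWalk R A X (p ++ [e]))
    (hb : IsWalk R Y B (c :: q)) (hec : e = c ∨ R e c) :
    ∃ l, IsWalk R A B l ∧ ∀ v ∈ l, v ∈ p ++ [e] ∨ v ∈ c :: q := by
  rcases hec with rfl | hec
  · refine ⟨p ++ e :: q, ha.splice (m₁ := []) hb, fun v hv => ?_⟩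
    rcases mem_append.1 hv with h | h
    · exact .inl (mem_append_left _ h)
    · exact .inr h
  · exact ⟨_, ha.append hb (by simpa using hec), fun v => mem_append.1⟩

theorem IsWalk.exists_prefix (hl : IsWalk R A B l) (hT : ∃ t ∈ T, t ∈ l) :
    ∃ p t, p ++ [t] <+: l ∧ IsWalk R A T (p ++ [t]) ∧ ∀ v ∈ p, v ∉ T := by
  classical
  obtain ⟨p, t, s, rfl, ht, hp⟩ :=
    exists_eq_append_cons_of_exists_mem (P := (· ∈ T)) (hT.imp fun _ => And.symm)
  obtain ⟨a, ha, hla⟩ := hl.head_mem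
  refine ⟨p, t, ⟨s, by simp⟩, ⟨(isChain_split.1 hl.isChain).1, ⟨a, ha, ?_⟩, ⟨t, ht, by simp⟩⟩, hp⟩
  simpa using hla

theorem IsLinkage.exists_truncation {P : Fin k → List V} (hP : IsLinkage R A T P) :
    ∃ (p : Fin k → List V) (e : Fin k → V),
      IsLinkage R A T (fun i => p i ++ [e i]) ∧ ∀ i, ∀ v ∈ p i, v ∉ T := by
  have hmeet : ∀ i, ∃ t ∈ T, t ∈ P i := fun i => by
    obtain ⟨b, hb, hlb⟩ := (hP.isWalk i).getLast_mem
    exact ⟨b, hb, mem_of_getLast? hlb⟩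
  choose p e hpre hwalk hp using fun i => (hP.isWalk i).exists_prefix (hmeet i)
  exact ⟨p, e, ⟨hwalk, fun i j hij v hvi hvj =>
    hP.pairwise_disjoint hij ((hpre i).subset hvi) ((hpre j).subset hvj)⟩, hp⟩

theorem IsLinkage.exists_head_eq {c : Fin k → V} {q : Fin k → List V}
    (hP : IsLinkage R A B fun i => c i :: q i) (hA : A.card ≤ k) {a : V} (ha : a ∈ A) :
    ∃ i, c i = a := by
  have hinj : ∀ i j, c i = c j → i = j := fun i j hij => by
    by_contra hne
    exact hP.pairwise_disjoint hne mem_cons_self (hij ▸ mem_cons_self)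
  obtain ⟨i, -, hi⟩ := surj_on_of_inj_on_of_card_le (s := univ) (fun i _ => c i)
    (fun i _ => (hP.isWalk i).mem_of_cons) (fun i j _ _ => hinj i j) (by simpa using hA) a ha
  exact ⟨i, hi.symm⟩

/-- Otherwise the two segments would splice to an `A`–`B` walk avoiding `S`. -/
theorem Separates.mem_of_mem_of_mem {p q : List V} {e c v : V} (hS : Separates R A B S)
    (ha : IsWalk R A X (p ++ [e])) (hp : ∀ u ∈ p, u ∉ S)
    (hb : IsWalk R Y B (c :: q)) (hq : ∀ u ∈ q, u ∉ S)
    (hva : v ∈ p ++ [e]) (hvb : v ∈ c :: q) : v ∈ S ∧ v = e ∧ v = c := by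
  obtain ⟨l₁, l₂, hl, hl₁⟩ : ∃ l₁ l₂, p ++ [e] = l₁ ++ v :: l₂ ∧ ∀ u ∈ l₁, u ∉ S := by
    rcases mem_append.1 hva with h | h
    · obtain ⟨l₁, l₂, rfl⟩ := append_of_mem h
      exact ⟨l₁, l₂ ++ [e], by simp, fun u hu => hp u (by simp [hu])⟩
    · obtain rfl := List.mem_singleton.1 h
      exact ⟨p, [], rfl, hp⟩
  obtain ⟨m₁, m₂, hm, hm₂⟩ : ∃ m₁ m₂, c :: q = m₁ ++ v :: m₂ ∧ ∀ u ∈ m₂, u ∉ S := by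
    rcases mem_cons.1 hvb with rfl | h
    · exact ⟨[], q, rfl, hq⟩
    · obtain ⟨m₁, m₂, rfl⟩ := append_of_mem h
      exact ⟨c :: m₁, m₂, rfl, fun u hu => hq u (by simp [hu])⟩
  obtain ⟨s, hs, hsl⟩ := hS _ ((hl ▸ ha).splice (hm ▸ hb))
  have hvS : v ∈ S := by
    rcases mem_append.1 hsl with h | h
    · exact absurd hs (hl₁ s h)
    · rcases mem_cons.1 h with rfl | h
      · exact hs
      · exact absurd hs (hm₂ s h)
  have hvp : v ∉ p := fun h => hp v h hvS
  have hvq : v ∉ q := fun h => hq v h hvS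
  exact ⟨hvS, by simpa [hvp] using hva, by simpa [hvq] using hvb⟩

end Walks

section AddArc

theorem flip_addArc : flip (addArc R x y) = addArc (flip R) y x := by
  funext u w
  simp [addArc, flip, and_comm]

theorem isChain_of_isChain_addArc (h : l.IsChain (addArc R x y)) (hx : x ∉ l.dropLast) :
    l.IsChain R := by
  induction l with
  | nil => exact .nil
  | cons u l ih =>
    rcases l with _ | ⟨w, l⟩
    · exact .singleton u
    · rw [isChain_cons_cons] at h ⊢
      rw [dropLast_cons_cons, List.mem_cons, not_or] at hx
      exact ⟨h.1.resolve_right fun h' => hx.1 h'.1.symm, ih h.2 hx.2⟩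

theorem Separates.addArc_insert_source [DecidableEq V] (hS : Separates R A B S) :
    Separates (addArc R x y) A B (insert x S) := by
  intro l hl
  by_cases hx : x ∈ l
  · exact ⟨x, mem_insert_self x S, hx⟩
  · obtain ⟨s, hs, hsl⟩ := hS l ⟨isChain_of_isChain_addArc hl.isChain
      fun h => hx (dropLast_subset _ h), hl.head_mem, hl.getLast_mem⟩
    exact ⟨s, mem_insert_of_mem hs, hsl⟩

theorem Separates.addArc_insert_target [DecidableEq V] (hS : Separates R A B S) :
    Separates (addArc R x y) A B (insert y S) := by
  have := (separates_flip_iff.2 hS).addArc_insert_source (x := y) (y := x)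
  rwa [← flip_addArc, separates_flip_iff] at this

/-- Since `x ∈ X`, a walk stopped at its first visit to `X` does not use the arc `x → y`. -/
theorem Separates.of_separates_addArc (hX : Separates (addArc R x y) A B X) (hxX : x ∈ X)
    (hT : Separates R A X T) : Separates (addArc R x y) A B T := by
  intro l hl
  obtain ⟨p, t, hpre, hwalk, hp⟩ := hl.exists_prefix (hX l hl)
  have hchain : (p ++ [t]).IsChain R :=
    isChain_of_isChain_addArc hwalk.isChain (by simpa using fun h => hp x h hxX)
  obtain ⟨s, hs, hsl⟩ := hT _ ⟨hchain, hwalk.head_mem, hwalk.getLast_mem⟩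
  exact ⟨s, hs, hpre.subset hsl⟩

theorem HasMengerProperty.exists_truncated_linkage (hR : HasMengerProperty R)
    (hk : ∀ T, Separates (addArc R x y) A B T → k ≤ T.card)
    (hX : Separates (addArc R x y) A B X) (hxX : x ∈ X) :
    ∃ (p : Fin k → List V) (e : Fin k → V),
      IsLinkage R A X (fun i => p i ++ [e i]) ∧ ∀ i, ∀ v ∈ p i, v ∉ X := by
  obtain ⟨P, hP⟩ := hR A X k fun T hT => hk T (hX.of_separates_addArc hxX hT)
  exact hP.exists_truncation

/-- The path ending at `e ∈ insert x S` continues along the path starting at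
`Equiv.swap x y e ∈ insert y S`, which is `e` itself unless `e = x`, where the arc `x → y`
bridges the gap. -/
theorem exists_linkage_addArc [DecidableEq V] {p q : Fin k → List V} {e c : Fin k → V}
    (hS : Separates R A B S) (hxS : x ∉ S) (hyS : y ∉ S) (hk : (insert y S).card ≤ k)
    (hA : IsLinkage R A (insert x S) fun i => p i ++ [e i]) (hp : ∀ i, ∀ v ∈ p i, v ∉ S)
    (hB : IsLinkage R (insert y S) B fun j => c j :: q j) (hq : ∀ j, ∀ v ∈ q j, v ∉ S) :
    ∃ P : Fin k → List V, IsLinkage (addArc R x y) A B P := by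
  have he : ∀ i, e i ∈ insert x S := fun i => (hA.isWalk i).mem_of_concat
  have hswap : ∀ {v}, v ∈ S → Equiv.swap x y v = v := fun hv =>
    Equiv.swap_apply_of_ne_of_ne (ne_of_mem_of_not_mem hv hxS) (ne_of_mem_of_not_mem hv hyS)
  have he_inj : ∀ i j, e i = e j → i = j := fun i j hij => by
    by_contra hne
    exact hA.pairwise_disjoint hne (mem_concat_self ..) (hij ▸ mem_concat_self ..)
  choose σ hσ using fun i => hB.exists_head_eq hk (a := Equiv.swap x y (e i)) (by
    rcases mem_insert.1 (he i) with h | h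
    · simp [h]
    · simp [hswap h, h])
  have hjoin : ∀ i, ∃ l, IsWalk (addArc R x y) A B l ∧
      ∀ v ∈ l, v ∈ p i ++ [e i] ∨ v ∈ c (σ i) :: q (σ i) := fun i =>
    ((hA.isWalk i).mono fun _ _ => Or.inl).join ((hB.isWalk (σ i)).mono fun _ _ => Or.inl) (by
      rw [hσ]
      rcases mem_insert.1 (he i) with h | h
      · simp [h]
      · exact .inl (hswap h).symm)
  choose P hP hPmem using hjoin
  have hσ_ne : ∀ {i i'}, i ≠ i' → σ i ≠ σ i' := fun hii' h =>
    hii' (he_inj _ _ ((Equiv.swap x y).injective (by rw [← hσ, ← hσ, h])))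
  have hcross_ne : ∀ {i i' v}, i ≠ i' → v ∈ p i ++ [e i] → v ∉ c (σ i') :: q (σ i') :=
    fun hii' hva hvb => by
      obtain ⟨hvS, rfl, hvc⟩ :=
        hS.mem_of_mem_of_mem (hA.isWalk _) (hp _) (hB.isWalk _) (hq _) hva hvb
      rw [hσ, ← hswap hvS] at hvc
      exact hii' (he_inj _ _ ((Equiv.swap x y).injective hvc))
  refine ⟨P, hP, fun i i' hii' v hv hv' => ?_⟩
  rcases hPmem i v hv with h | h <;> rcases hPmem i' v hv' with h' | h'
  · exact hA.pairwise_disjoint hii' h h'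
  · exact hcross_ne hii' h h'
  · exact hcross_ne (Ne.symm hii') h' h
  · exact hB.pairwise_disjoint (hσ_ne hii') h h'

theorem HasMengerProperty.addArc (hR : HasMengerProperty R) (x y : V) :
    HasMengerProperty (addArc R x y) := by
  classical
  intro A B k hk
  by_cases hsmall : ∀ S, Separates R A B S → k ≤ S.card
  · obtain ⟨P, hP⟩ := hR A B k hsmall
    exact ⟨P, hP.mono fun _ _ => Or.inl⟩
  push Not at hsmall
  obtain ⟨S, hS, hSk⟩ := hsmall
  have hX := hS.addArc_insert_source (x := x) (y := y)
  have hY := hS.addArc_insert_target (x := x) (y := y)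
  have hxS : x ∉ S := fun h => by
    have := hk _ hX
    rw [insert_eq_of_mem h] at this
    omega
  have hyS : y ∉ S := fun h => by
    have := hk _ hY
    rw [insert_eq_of_mem h] at this
    omega
  have hYk : (insert y S).card ≤ k := by
    rw [card_insert_of_notMem hyS]
    omega
  have hk' : ∀ T, Separates (Menger.addArc (_root_.flip R) y x) B A T → k ≤ T.card :=
    fun T hT => hk T (by rwa [← flip_addArc, separates_flip_iff] at hT)
  obtain ⟨p, e, hA, hp⟩ := hR.exists_truncated_linkage hk hX (mem_insert_self x S)
  obtain ⟨p', e', hB, hp'⟩ := hR.flip.exists_truncated_linkage hk'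
    (by rwa [← flip_addArc, separates_flip_iff]) (mem_insert_self y S)
  exact exists_linkage_addArc hS hxS hyS hYk hA
    (fun i v hv hvS => hp i v hv (mem_insert_of_mem hvS)) (by simpa using hB.reverse)
    (fun j v hv hvS => hp' j v (by simpa using hv) (mem_insert_of_mem hvS))

end AddArc

theorem hasMengerProperty_bot : HasMengerProperty fun _ _ : V => False := by
  classical
  intro A B k hk
  have hsep : Separates (fun _ _ => False) A B (A ∩ B) := by
    rintro (_ | ⟨v, _ | ⟨w, l⟩⟩) ⟨hl, ⟨a, ha, hla⟩, ⟨b, hb, hlb⟩⟩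
    · simp at hla
    · simp only [head?_cons, getLast?_singleton, Option.some_inj] at hla hlb
      subst hla hlb
      exact ⟨v, mem_inter.2 ⟨ha, hb⟩, mem_cons_self⟩
    · exact (isChain_cons_cons.1 hl).1.elim
  obtain ⟨f⟩ := Function.Embedding.nonempty_of_card_le (α := Fin k) (β := ↥(A ∩ B))
    (by simpa using hk _ hsep)
  refine ⟨fun i => [(f i : V)], fun i => ?_, fun i j hij => ?_⟩
  · have := mem_inter.1 (f i).2
    exact ⟨isChain_singleton _, ⟨_, this.1, rfl⟩, ⟨_, this.2, rfl⟩⟩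
  · simpa [Subtype.ext_iff, eq_comm] using f.injective.ne hij

theorem hasMengerProperty_of_finset (E : Finset (V × V)) :
    HasMengerProperty fun u w => (u, w) ∈ E := by
  classical
  induction E using Finset.induction_on with
  | empty => simpa using hasMengerProperty_bot
  | insert a E _ ih =>
    convert ih.addArc a.1 a.2 using 1
    funext u w
    simp [Menger.addArc, Prod.ext_iff, or_comm]

theorem hasMengerProperty_of_finite (h : {p : V × V | R p.1 p.2}.Finite) :
    HasMengerProperty R := by
  simpa using hasMengerProperty_of_finset h.toFinset

end Menger

open Menger

namespace SimpleGraph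

variable {V : Type*} {G : SimpleGraph V}

theorem exists_isPath_of_isWalk {A B : Finset V} {l : List V} (h : IsWalk G.Adj A B l) :
    ∃ a ∈ A, ∃ b ∈ B, ∃ w : G.Walk a b, w.IsPath ∧ w.support ⊆ l := by
  classical
  obtain ⟨a, ha, hla⟩ := h.head_mem
  obtain ⟨b, hb, hlb⟩ := h.getLast_mem
  have hne : l ≠ [] := by rintro rfl; simp at hla
  obtain rfl := (head_eq_iff_head?_eq_some hne).2 hla
  obtain rfl := (getLast_eq_iff_getLast?_eq_some hne).2 hlb
  refine ⟨_, ha, _, hb, (Walk.ofSupport l hne h.isChain).bypass, Walk.bypass_isPath _, ?_⟩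
  simpa using Walk.support_bypass_subset_support (Walk.ofSupport l hne h.isChain)

variable [Fintype V]

open Classical in
noncomputable def reachAvoiding (G : SimpleGraph V) (C S : Finset V) : Finset V :=
  univ.filter fun u => ∃ l, IsWalk G.Adj C {u} l ∧ ∀ v ∈ l, v ∉ S

variable {C S : Finset V}

theorem mem_reachAvoiding {u : V} :
    u ∈ G.reachAvoiding C S ↔ ∃ l, IsWalk G.Adj C {u} l ∧ ∀ v ∈ l, v ∉ S := by
  simp [reachAvoiding]

theorem subset_union_reachAvoiding [DecidableEq V] : C ⊆ S ∪ G.reachAvoiding C S := by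
  intro c hc
  by_cases hcS : c ∈ S
  · exact mem_union_left _ hcS
  · refine mem_union_right _ (mem_reachAvoiding.2 ⟨[c], ?_, by simpa using hcS⟩)
    exact ⟨isChain_singleton c, ⟨c, hc, rfl⟩, ⟨c, Finset.mem_singleton_self c, rfl⟩⟩

theorem biUnion_neighborFinset_sdiff_reachAvoiding_subset [DecidableEq V] [DecidableRel G.Adj] :
    (G.reachAvoiding C S).biUnion (fun v => G.neighborFinset v) \ G.reachAvoiding C S ⊆ S := by
  intro v hv
  obtain ⟨⟨u, hu, huv⟩, hvX⟩ := by simpa only [mem_sdiff, mem_biUnion] using hv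
  by_contra hvS
  obtain ⟨l, hl, hlS⟩ := mem_reachAvoiding.1 hu
  refine hvX (mem_reachAvoiding.2 ⟨l ++ [v], ?_, fun w hw => ?_⟩)
  · refine hl.append (Y := {v}) ⟨isChain_singleton v, ⟨v, Finset.mem_singleton_self v, rfl⟩,
      ⟨v, Finset.mem_singleton_self v, rfl⟩⟩ fun u' hu' w hw => ?_
    simp_all [hl.getLast?_eq]
  · rcases List.mem_append.1 hw with h | h
    · exact hlS w h
    · exact List.mem_singleton.1 h ▸ hvS

theorem _root_.Menger.Separates.disjoint_reachAvoiding {A B : Finset V}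
    (hS : Separates G.Adj A B S) : Disjoint (G.reachAvoiding A S) (G.reachAvoiding B S) := by
  refine Finset.disjoint_left.2 fun u huA huB => ?_
  obtain ⟨lA, hlA, hlAS⟩ := mem_reachAvoiding.1 huA
  obtain ⟨lB, hlB, hlBS⟩ := mem_reachAvoiding.1 huB
  have hlB' : IsWalk G.Adj {u} B lB.reverse := hlB.reverse.mono fun _ _ h => h.symm
  obtain ⟨l₁, l₂, rfl⟩ := append_of_mem (mem_of_getLast? hlA.getLast?_eq)
  obtain ⟨m₁, m₂, hm⟩ := append_of_mem (mem_reverse.2 (mem_of_getLast? hlB.getLast?_eq))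
  obtain ⟨s, hs, hsl⟩ := hS _ (hlA.splice (hm ▸ hlB'))
  have : s ∈ l₁ ++ u :: l₂ ∨ s ∈ lB := by
    rcases List.mem_append.1 hsl with h | h
    · exact .inl (by simp [h])
    · rcases mem_cons.1 h with rfl | h
      · exact .inl (by simp)
      · exact .inr (mem_reverse.1 (hm ▸ by simp [h]))
  rcases this with h | h
  · exact hlAS s h hs
  · exact hlBS s h hs

namespace IsExpander

variable [DecidableEq V] [DecidableRel G.Adj] {α t : ℝ}

theorem le_card_of_biUnion_sdiff_subset (hG : G.IsExpander α) (hα : 0 ≤ α) {X : Finset V}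
    (hX : 2 * X.card ≤ Fintype.card V) (hXS : X.biUnion (fun v => G.neighborFinset v) \ X ⊆ S)
    (hC : C ⊆ S ∪ X) (ht : t ≤ C.card) : t * α / (1 + α) ≤ S.card := by
  have hexp : α * X.card ≤ S.card := (hG X hX).trans (by exact_mod_cast card_le_card hXS)
  have hCX : (C.card : ℝ) ≤ S.card + X.card := by
    exact_mod_cast (card_le_card hC).trans (card_union_le S X)
  rw [div_le_iff₀ (by positivity)]
  nlinarith

theorem le_card_of_separates (hG : G.IsExpander α) (hα : 0 ≤ α) {A B : Finset V}
    (hA : t ≤ A.card) (hB : t ≤ B.card) (hS : Separates G.Adj A B S) :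
    t * α / (1 + α) ≤ S.card := by
  have hcard : (G.reachAvoiding A S).card + (G.reachAvoiding B S).card ≤ Fintype.card V := by
    rw [← card_union_of_disjoint hS.disjoint_reachAvoiding]
    exact card_le_univ _
  rcases le_total (G.reachAvoiding A S).card (G.reachAvoiding B S).card with h | h
  · exact hG.le_card_of_biUnion_sdiff_subset hα (by omega)
      biUnion_neighborFinset_sdiff_reachAvoiding_subset subset_union_reachAvoiding hA
  · exact hG.le_card_of_biUnion_sdiff_subset hα (by omega)
      biUnion_neighborFinset_sdiff_reachAvoiding_subset subset_union_reachAvoiding hB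

end IsExpander

end SimpleGraph

theorem expander_disjoint_paths_general {V : Type*} [Fintype V] [DecidableEq V]
    (G : SimpleGraph V) [DecidableRel G.Adj] (α : ℝ) (hα : 0 < α)
    (hG : G.IsExpander α) (A B : Finset V) (t : ℝ)
    (hA : t ≤ A.card) (hB : t ≤ B.card) :
    ∃ (k : ℕ) (a b : Fin k → V) (p : ∀ i, G.Walk (a i) (b i)),
      t * α / (1 + α) ≤ k ∧
      (∀ i, (p i).IsPath) ∧
      (∀ i, a i ∈ A ∧ b i ∈ B) ∧
      (∀ i j, i ≠ j → ∀ x ∈ (p i).support, x ∉ (p j).support) := by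
  obtain ⟨P, hP⟩ := hasMengerProperty_of_finite (R := G.Adj) (Set.toFinite _) A B
    ⌈t * α / (1 + α)⌉₊ fun S hS => Nat.ceil_le.2 (hG.le_card_of_separates hα.le hA hB hS)
  choose a ha b hb p hp hpP using fun i => SimpleGraph.exists_isPath_of_isWalk (hP.isWalk i)
  exact ⟨_, a, b, p, Nat.le_ceil _, hp, fun i => ⟨ha i, hb i⟩,
    fun i j hij v hvi hvj => hP.pairwise_disjoint hij (hpP i hvi) (hpP j hvj)⟩

/-- Let `G` be an `α`-expander and `A, B` vertex sets of size at least `t`.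
Then `G` contains at least `tα/(1+α)` pairwise vertex-disjoint paths,
each with one endpoint in `A` and the other in `B`. -/
theorem expander_disjoint_paths {V : Type*} [Fintype V] [DecidableEq V]
    (G : SimpleGraph V) [DecidableRel G.Adj] (α : ℝ) (hα : 0 < α)
    (hG : G.IsExpander α) (A B : Finset V) (t : ℝ) (ht : 0 < t)
    (hA : t ≤ A.card) (hB : t ≤ B.card) :
    ∃ (k : ℕ) (a b : Fin k → V) (p : ∀ i, G.Walk (a i) (b i)),
      t * α / (1 + α) ≤ k ∧
      (∀ i, (p i).IsPath) ∧
      (∀ i, a i ∈ A ∧ b i ∈ B) ∧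
      (∀ i j, i ≠ j → ∀ x ∈ (p i).support, x ∉ (p j).support) :=
  expander_disjoint_paths_general G α hα hG A B t hA hB
end

section
/- Let G be a graph with an odd cycle C of odd length ℓ, and let u, v be two vertices each connected to C by vertex-disjoint paths p_u and p_v (disjoint from each other and meeting C only in their endpoints). Then there exist both an odd-length and an even-length path in G between u and v, each of length at most |p_u| + |p_v| + ℓ. -/
/-!
Cut the odd cycle at the endpoints `wu ≠ wv` into two arcs; their lengths add up to the odd
length of the cycle, so they have opposite parity. Prolonging each arc by `pu` and `pv` gives two
`u`–`v` paths whose lengths still have opposite parity and are bounded by `|pu| + |pv| + |c|`.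
-/

namespace SimpleGraph.Walk

variable {V : Type*} {G : SimpleGraph V}

theorem IsPath.append_of_support_meet {a b d : V} {p : G.Walk a b} {q : G.Walk b d}
    (hp : p.IsPath) (hq : q.IsPath) (h : ∀ y ∈ p.support, y ∈ q.support → y = b) :
    (p.append q).IsPath := by
  rw [isPath_def, support_append, List.nodup_append]
  refine ⟨hp.support_nodup, hq.support_nodup.tail, fun y hy z hz hyz => ?_⟩
  subst hyz
  have hyb : y = b := h y hy (q.cons_tail_support ▸ List.mem_cons_of_mem _ hz)
  have hnd := hq.support_nodup
  rw [← q.cons_tail_support, List.nodup_cons] at hnd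
  exact hnd.1 (hyb ▸ hz)

theorem IsCycle.exists_isPath_arcs {x a b : V} {c : G.Walk x x} (hc : c.IsCycle)
    (ha : a ∈ c.support) (hb : b ∈ c.support) (hab : a ≠ b) :
    ∃ p q : G.Walk a b, p.IsPath ∧ q.IsPath ∧ p.length + q.length = c.length ∧
      p.support ⊆ c.support ∧ q.support ⊆ c.support := by
  classical
  have hb' : b ∈ (c.rotate a ha).support := (mem_support_rotate_iff c a ha).2 hb
  have hspec := (c.rotate a ha).take_spec hb'
  have hc' : (((c.rotate a ha).takeUntil b hb').append
      ((c.rotate a ha).dropUntil b hb')).IsCycle := by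
    rw [hspec]
    exact hc.rotate ha
  refine ⟨_, ((c.rotate a ha).dropUntil b hb').reverse,
    hc'.isPath_of_append_left (not_nil_of_ne hab.symm),
    (hc'.isPath_of_append_right (not_nil_of_ne hab)).reverse, ?_, fun y hy => ?_, fun y hy => ?_⟩
  · rw [length_reverse, ← length_append, hspec, length_rotate]
  · exact (mem_support_rotate_iff c a ha).1 (support_takeUntil_subset_support _ hb' hy)
  · rw [support_reverse, List.mem_reverse] at hy
    exact (mem_support_rotate_iff c a ha).1 (support_dropUntil_subset_support _ hb' hy)

theorem isPath_append_append_reverse {s : Set V} {u v wu wv : V}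
    {pu : G.Walk u wu} {pv : G.Walk v wv} {a : G.Walk wu wv}
    (hpu : pu.IsPath) (hpv : pv.IsPath) (ha : a.IsPath) (has : ∀ y ∈ a.support, y ∈ s)
    (hmeetu : ∀ y ∈ pu.support, y ∈ s → y = wu) (hmeetv : ∀ y ∈ pv.support, y ∈ s → y = wv)
    (hdisj : ∀ y ∈ pu.support, y ∉ pv.support) :
    (pu.append (a.append pv.reverse)).IsPath := by
  have hav : (a.append pv.reverse).IsPath := by
    refine ha.append_of_support_meet hpv.reverse fun y hy hy' => ?_
    rw [support_reverse, List.mem_reverse] at hy'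
    exact hmeetv y hy' (has y hy)
  refine hpu.append_of_support_meet hav fun y hy hy' => ?_
  rcases (mem_support_append_iff _ _).1 hy' with h | h
  · exact hmeetu y hy (has y h)
  · rw [support_reverse, List.mem_reverse] at h
    exact absurd h (hdisj y hy)

end SimpleGraph.Walk

open SimpleGraph Walk

/-- Let `G` contain an odd cycle `c` (of odd length) and let `u, v` be vertices
joined to the cycle by paths `pu` (from `u` to `wu ∈ c`) and `pv` (from `v` to
`wv ∈ c`) which are disjoint from each other and meet the cycle only in their
endpoints.  Then there are both an odd-length and an even-length path from `u`
to `v` in `G`, each of length at most `|pu| + |pv| + |c|`. -/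
theorem odd_and_even_path_via_odd_cycle {V : Type*}
    (G : SimpleGraph V) {x u v wu wv : V} (c : G.Walk x x)
    (hc : c.IsCycle) (hodd : Odd c.length)
    (pu : G.Walk u wu) (pv : G.Walk v wv)
    (hpu : pu.IsPath) (hpv : pv.IsPath)
    (hwu : wu ∈ c.support) (hwv : wv ∈ c.support)
    (hmeetu : ∀ y ∈ pu.support, y ∈ c.support → y = wu)
    (hmeetv : ∀ y ∈ pv.support, y ∈ c.support → y = wv)
    (hdisj : ∀ y ∈ pu.support, y ∉ pv.support) :
    ∃ (q₁ q₂ : G.Walk u v),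
      q₁.IsPath ∧ q₂.IsPath ∧
      Odd q₁.length ∧ Even q₂.length ∧
      q₁.length ≤ pu.length + pv.length + c.length ∧
      q₂.length ≤ pu.length + pv.length + c.length := by
  have hne : wu ≠ wv := fun h => hdisj wu pu.end_mem_support (h ▸ pv.end_mem_support)
  obtain ⟨d₁, d₂, hd₁, hd₂, hlen, hs₁, hs₂⟩ := hc.exists_isPath_arcs hwu hwv hne
  have detour := fun (d : G.Walk wu wv) (hd : d.IsPath) (hs : d.support ⊆ c.support) =>
    isPath_append_append_reverse (s := {y | y ∈ c.support}) hpu hpv hd hs hmeetu hmeetv hdisj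
  set q₁ := pu.append (d₁.append pv.reverse)
  set q₂ := pu.append (d₂.append pv.reverse)
  have hl₁ : q₁.length = pu.length + d₁.length + pv.length := by
    simp only [q₁, length_append, length_reverse]; omega
  have hl₂ : q₂.length = pu.length + d₂.length + pv.length := by
    simp only [q₂, length_append, length_reverse]; omega
  have hpar : Odd (q₁.length + q₂.length) := by
    rw [show q₁.length + q₂.length = 2 * (pu.length + pv.length) + c.length by omega]
    exact (even_two_mul _).add_odd hodd
  rcases Nat.even_or_odd q₁.length with he | ho
  · exact ⟨q₂, q₁, detour d₂ hd₂ hs₂, detour d₁ hd₁ hs₁,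
      (Nat.odd_add'.1 hpar).2 he, he, by omega, by omega⟩
  · exact ⟨q₁, q₂, detour d₁ hd₁ hs₁, detour d₂ hd₂ hs₂, ho,
      (Nat.odd_add.1 hpar).1 ho, by omega, by omega⟩
end
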